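/- arXiv:1505.02077 — 4 statements merged into one kernel-verified Lean document; each statement's English description precedes it below -/
import Mathlib

section
/- Let {Z_n} be a stationary sequence satisfying condition D^(2)(u_n) for levels u_n with n·P(Z_1 > u_n) → τ* and n·P(Z_1 ≤ u_n < Z_2) → ν*. Then {Z_n} satisfies condition D^(1)(u_n) if and only if τ* = ν*, i.e. the limiting mean number of exceedances equals the limiting mean number of upcrossings. -/
open MeasureTheory Filter ProbabilityTheory

noncomputable section

namespace EIPaper

variable {Ω : Type*} [MeasurableSpace Ω]

/-- `P(A)` as a real number. -/
def pr (μ : Measure Ω) (A : Set Ω) : ℝ := (μ A).toReal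

/-- Block maximum `M_{i,j} = max_{s=i+1,…,j} X_s`, real-valued
(with junk value `0` when the block is empty, i.e. when `i ≥ j`). -/
def bmax (X : ℕ → Ω → ℝ) (i j : ℕ) (ω : Ω) : ℝ :=
  WithBot.unbotD 0 (((Finset.Icc (i + 1) j).image fun s => X s ω).max)

/-- The event `M_{i,j} ≤ u` (with the convention `M_{i,j} = -∞` for empty blocks). -/
def maxLE (X : ℕ → Ω → ℝ) (i j : ℕ) (u : ℝ) : Set Ω :=
  {ω | ∀ s ∈ Finset.Icc (i + 1) j, X s ω ≤ u}

/-- The event `M_{i,j} > u` (with the convention `M_{i,j} = -∞` for empty blocks). -/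
def maxGT (X : ℕ → Ω → ℝ) (i j : ℕ) (u : ℝ) : Set Ω :=
  {ω | ∃ s ∈ Finset.Icc (i + 1) j, u < X s ω}

/-- Stationarity of the sequence `X`. -/
def IsStationary (μ : Measure Ω) (X : ℕ → Ω → ℝ) : Prop :=
  ∀ m : ℕ, Measure.map (fun ω => fun i : ℕ => X (i + m) ω) μ
    = Measure.map (fun ω => fun i : ℕ => X i ω) μ

/-- The Leadbetter mixing coefficient `α_{n,l}` for the level `u`. -/
def alphaMix (μ : Measure Ω) (X : ℕ → Ω → ℝ) (u : ℝ) (n l : ℕ) : ℝ :=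
  sSup {a : ℝ | ∃ i₁ p q j₁ : ℕ, 1 ≤ i₁ ∧ 1 ≤ p ∧ 1 ≤ q ∧
    i₁ + p + l ≤ j₁ ∧ j₁ + q ≤ n ∧
    a = |pr μ (maxLE X i₁ (i₁ + p) u ∩ maxLE X j₁ (j₁ + q) u)
        - pr μ (maxLE X i₁ (i₁ + p) u) * pr μ (maxLE X j₁ (j₁ + q) u)|}

/-- Leadbetter's long-range dependence condition `D(u_n)`. -/
def CondD (μ : Measure Ω) (X : ℕ → Ω → ℝ) (u : ℕ → ℝ) : Prop :=
  ∃ l : ℕ → ℕ,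
    Tendsto (fun n => (l n : ℝ) / (n : ℝ)) atTop (nhds 0) ∧
    Tendsto (fun n => alphaMix μ X (u n) n (l n)) atTop (nhds 0)

/-- Admissibility of a block-count sequence `k_n` for the conditions `D^{(k)}(u_n)`:
`k_n → ∞`, `k_n α_{n,l_n} → 0` and `k_n l_n / n → 0` for some spacer sequence `l_n`. -/
def AdmissibleK (μ : Measure Ω) (X : ℕ → Ω → ℝ) (u : ℕ → ℝ) (kseq : ℕ → ℕ) : Prop :=
  ∃ l : ℕ → ℕ,
    Tendsto (fun n => (kseq n : ℝ)) atTop atTop ∧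
    Tendsto (fun n => (kseq n : ℝ) * alphaMix μ X (u n) n (l n)) atTop (nhds 0) ∧
    Tendsto (fun n => (kseq n : ℝ) * (l n : ℝ) / (n : ℝ)) atTop (nhds 0)

/-- The local part of condition `D^{(k)}(u_n)` with block length `r_n`:
`n ⬝ P(X_1 > u_n, M_{1,k} ≤ u_n < M_{k,r_n}) → 0`. -/
def LocalDk (μ : Measure Ω) (X : ℕ → Ω → ℝ) (u : ℕ → ℝ) (k : ℕ) (r : ℕ → ℕ) : Prop :=
  Tendsto (fun n : ℕ => (n : ℝ) *
      pr μ ({ω | u n < X 1 ω} ∩ maxLE X 1 k (u n) ∩ maxGT X k (r n) (u n)))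
    atTop (nhds 0)

/-- The local dependence condition `D^{(k)}(u_n)` of Chernick, Hsing and McCormick. -/
def CondDk (μ : Measure Ω) (X : ℕ → Ω → ℝ) (u : ℕ → ℝ) (k : ℕ) : Prop :=
  ∃ kseq : ℕ → ℕ, AdmissibleK μ X u kseq ∧ LocalDk μ X u k (fun n => n / kseq n)

/-- The cycle sequence `Z_n = M_{I_{n-1}, I_n}` of a renewal process `I`. -/
def cyc (X : ℕ → Ω → ℝ) (I : ℕ → Ω → ℕ) (n : ℕ) (ω : Ω) : ℝ :=
  bmax X (I (n - 1) ω) (I n ω) ω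

/-- `θ` is the extremal index of the stationary sequence `X`. -/
def HasExtremalIndex (μ : Measure Ω) (X : ℕ → Ω → ℝ) (θ : ℝ) : Prop :=
  ∀ τ : ℝ, 0 < τ → ∃ u : ℕ → ℝ,
    Tendsto (fun n : ℕ => (n : ℝ) * pr μ {ω | u n < X 1 ω}) atTop (nhds τ) ∧
    Tendsto (fun n => pr μ {ω | ∀ s ∈ Finset.Icc 1 n, X s ω ≤ u n}) atTop
      (nhds (Real.exp (-(θ * τ))))

/-- The finite-dimensional distributions of `X` are multivariate extreme value
(max-stable) distributions: `G(m x₁, …, m x_d)^m = G(x₁, …, x_d)`. -/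
def MaxStableFDD (μ : Measure Ω) (X : ℕ → Ω → ℝ) : Prop :=
  ∀ (d : ℕ) (x : Fin d → ℝ) (m : ℕ), 1 ≤ m → (∀ i, 0 < x i) →
    (pr μ {ω | ∀ i : Fin d, X ((i : ℕ) + 1) ω ≤ (m : ℝ) * x i}) ^ m
      = pr μ {ω | ∀ i : Fin d, X ((i : ℕ) + 1) ω ≤ x i}

/-- The moving maxima process `X_n = sup_{l ≥ 1} sup_{j ∈ ℤ} α_{l,j} Y_{l,n-j}`. -/
def mmProc (α : ℕ → ℤ → ℝ) (Y : ℕ → ℤ → Ω → ℝ) : ℕ → Ω → ℝ :=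
  fun n ω => ⨆ (l : ℕ) (j : ℤ), α l j * Y l ((n : ℤ) - j) ω


/-! ### Auxiliary lemmas -/

section Aux

variable (μ : Measure Ω) [IsProbabilityMeasure μ]

lemma pr_nonneg (A : Set Ω) : 0 ≤ pr μ A := ENNReal.toReal_nonneg

lemma pr_le_one (A : Set Ω) : pr μ A ≤ 1 := by
  have h : (μ A).toReal ≤ (1 : ENNReal).toReal :=
    ENNReal.toReal_mono ENNReal.one_ne_top prob_le_one
  simpa [pr] using h

lemma pr_mono {A B : Set Ω} (h : A ⊆ B) : pr μ A ≤ pr μ B :=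
  ENNReal.toReal_mono (measure_ne_top μ B) (measure_mono h)

lemma pr_union_le (A B : Set Ω) : pr μ (A ∪ B) ≤ pr μ A + pr μ B := by
  have h1 : μ (A ∪ B) ≤ μ A + μ B := measure_union_le A B
  have h2 : (μ (A ∪ B)).toReal ≤ (μ A + μ B).toReal :=
    ENNReal.toReal_mono (ENNReal.add_ne_top.mpr ⟨measure_ne_top μ A, measure_ne_top μ B⟩) h1
  rwa [ENNReal.toReal_add (measure_ne_top μ A) (measure_ne_top μ B)] at h2

lemma pr_split {B : Set Ω} (hB : MeasurableSet B) (S : Set Ω) :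
    pr μ S = pr μ (S ∩ B) + pr μ (S \ B) := by
  have h := measure_inter_add_diff (μ := μ) S hB
  rw [pr, pr, pr, ← ENNReal.toReal_add (measure_ne_top μ _) (measure_ne_top μ _), h]

lemma pr_compl {A : Set Ω} (hA : MeasurableSet A) : pr μ Aᶜ = 1 - pr μ A := by
  rw [pr, pr, prob_compl_eq_one_sub hA,
    ENNReal.toReal_sub_of_le prob_le_one ENNReal.one_ne_top, ENNReal.toReal_one]

lemma stat_apply (Z : ℕ → Ω → ℝ) (hZmeas : ∀ i, Measurable (Z i))
    (hZstat : IsStationary μ Z) (m : ℕ) {S : Set (ℕ → ℝ)} (hS : MeasurableSet S) :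
    μ ((fun ω => fun i : ℕ => Z (i + m) ω) ⁻¹' S)
      = μ ((fun ω => fun i : ℕ => Z i ω) ⁻¹' S) := by
  have h1 : Measurable fun ω => fun i : ℕ => Z (i + m) ω :=
    measurable_pi_lambda _ fun i => hZmeas _
  have h2 : Measurable fun ω => fun i : ℕ => Z i ω :=
    measurable_pi_lambda _ fun i => hZmeas _
  rw [← Measure.map_apply h1 hS, ← Measure.map_apply h2 hS, hZstat m]

lemma stat_e2 (Z : ℕ → Ω → ℝ) (hZmeas : ∀ i, Measurable (Z i))
    (hZstat : IsStationary μ Z) (v : ℝ) :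
    μ {ω | v < Z 2 ω} = μ {ω | v < Z 1 ω} := by
  have hS : MeasurableSet {f : ℕ → ℝ | v < f 1} :=
    measurableSet_preimage (measurable_pi_apply 1) measurableSet_Ioi
  have h := stat_apply μ Z hZmeas hZstat 1 hS
  have e1 : (fun ω => fun i : ℕ => Z (i + 1) ω) ⁻¹' {f | v < f 1} = {ω | v < Z 2 ω} := by
    ext ω; simp
  have e2 : (fun ω => fun i : ℕ => Z i ω) ⁻¹' {f | v < f 1} = {ω | v < Z 1 ω} := by
    ext ω; simp
  rwa [e1, e2] at h

lemma stat_e3 (Z : ℕ → Ω → ℝ) (hZmeas : ∀ i, Measurable (Z i))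
    (hZstat : IsStationary μ Z) (v : ℝ) :
    μ {ω | v < Z 3 ω} = μ {ω | v < Z 1 ω} := by
  have hS : MeasurableSet {f : ℕ → ℝ | v < f 1} :=
    measurableSet_preimage (measurable_pi_apply 1) measurableSet_Ioi
  have h := stat_apply μ Z hZmeas hZstat 2 hS
  have e1 : (fun ω => fun i : ℕ => Z (i + 2) ω) ⁻¹' {f | v < f 1} = {ω | v < Z 3 ω} := by
    ext ω; simp
  have e2 : (fun ω => fun i : ℕ => Z i ω) ⁻¹' {f | v < f 1} = {ω | v < Z 1 ω} := by
    ext ω; simp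
  rwa [e1, e2] at h

lemma stat_up (Z : ℕ → Ω → ℝ) (hZmeas : ∀ i, Measurable (Z i))
    (hZstat : IsStationary μ Z) (v : ℝ) :
    μ {ω | Z 2 ω ≤ v ∧ v < Z 3 ω} = μ {ω | Z 1 ω ≤ v ∧ v < Z 2 ω} := by
  have hS : MeasurableSet {f : ℕ → ℝ | f 1 ≤ v ∧ v < f 2} := by
    have e : {f : ℕ → ℝ | f 1 ≤ v ∧ v < f 2}
        = ((fun f : ℕ → ℝ => f 1) ⁻¹' Set.Iic v) ∩ ((fun f : ℕ → ℝ => f 2) ⁻¹' Set.Ioi v) := by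
      ext f; simp [Set.mem_Iic, Set.mem_Ioi]
    rw [e]
    exact (measurableSet_preimage (measurable_pi_apply 1) measurableSet_Iic).inter
      (measurableSet_preimage (measurable_pi_apply 2) measurableSet_Ioi)
  have h := stat_apply μ Z hZmeas hZstat 1 hS
  have e1 : (fun ω => fun i : ℕ => Z (i + 1) ω) ⁻¹' {f | f 1 ≤ v ∧ v < f 2}
      = {ω | Z 2 ω ≤ v ∧ v < Z 3 ω} := by ext ω; simp
  have e2 : (fun ω => fun i : ℕ => Z i ω) ⁻¹' {f | f 1 ≤ v ∧ v < f 2}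
      = {ω | Z 1 ω ≤ v ∧ v < Z 2 ω} := by ext ω; simp
  rwa [e1, e2] at h

lemma maxLE_12 (Z : ℕ → Ω → ℝ) (v : ℝ) : maxLE Z 1 2 v = {ω | Z 2 ω ≤ v} := by
  ext ω
  constructor
  · intro h; exact h 2 (by simp)
  · intro h s hs
    have : s = 2 := by
      rcases Finset.mem_Icc.mp hs with ⟨h1, h2⟩; omega
    subst this; exact h

lemma maxLE_23 (Z : ℕ → Ω → ℝ) (v : ℝ) : maxLE Z 2 3 v = {ω | Z 3 ω ≤ v} := by
  ext ω
  constructor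
  · intro h; exact h 3 (by simp)
  · intro h s hs
    have : s = 3 := by
      rcases Finset.mem_Icc.mp hs with ⟨h1, h2⟩; omega
    subst this; exact h

lemma abs_le_alpha (Z : ℕ → Ω → ℝ) (v : ℝ) (n : ℕ) (hn : 3 ≤ n) :
    |pr μ (maxLE Z 1 2 v ∩ maxLE Z 2 3 v) - pr μ (maxLE Z 1 2 v) * pr μ (maxLE Z 2 3 v)|
      ≤ alphaMix μ Z v n 0 := by
  unfold alphaMix
  apply le_csSup
  · refine ⟨1, ?_⟩
    rintro x ⟨i₁, p, q, j₁, -, -, -, -, -, rfl⟩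
    have h1 := pr_nonneg μ (maxLE Z i₁ (i₁ + p) v ∩ maxLE Z j₁ (j₁ + q) v)
    have h2 := pr_le_one μ (maxLE Z i₁ (i₁ + p) v ∩ maxLE Z j₁ (j₁ + q) v)
    have h3 := pr_nonneg μ (maxLE Z i₁ (i₁ + p) v)
    have h4 := pr_le_one μ (maxLE Z i₁ (i₁ + p) v)
    have h5 := pr_nonneg μ (maxLE Z j₁ (j₁ + q) v)
    have h6 := pr_le_one μ (maxLE Z j₁ (j₁ + q) v)
    rw [abs_le]
    constructor <;> nlinarith
  · exact ⟨1, 1, 1, 2, le_rfl, le_rfl, le_rfl, by norm_num, by omega, by norm_num⟩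

lemma alpha_nonneg (Z : ℕ → Ω → ℝ) (v : ℝ) (n : ℕ) (hn : 3 ≤ n) :
    0 ≤ alphaMix μ Z v n 0 :=
  le_trans (abs_nonneg _) (abs_le_alpha μ Z v n hn)

lemma exceed_tendsto_zero (Z : ℕ → Ω → ℝ) (u : ℕ → ℝ) (τs : ℝ)
    (hτs : Tendsto (fun n : ℕ => (n : ℝ) * pr μ {ω | u n < Z 1 ω}) atTop (nhds τs)) :
    Tendsto (fun n => pr μ {ω | u n < Z 1 ω}) atTop (nhds 0) := by
  have hinv : Tendsto (fun n : ℕ => ((n : ℝ))⁻¹) atTop (nhds 0) :=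
    tendsto_inv_atTop_zero.comp tendsto_natCast_atTop_atTop
  have h := hτs.mul hinv
  rw [mul_zero] at h
  apply h.congr'
  filter_upwards [eventually_ge_atTop 1] with n hn
  have hne : ((n : ℝ)) ≠ 0 := Nat.cast_ne_zero.mpr (by omega)
  field_simp

lemma tendsto_double (Z : ℕ → Ω → ℝ) (u : ℕ → ℝ) (τs νs : ℝ)
    (hZmeas : ∀ i, Measurable (Z i)) (hZstat : IsStationary μ Z)
    (hτs : Tendsto (fun n : ℕ => (n : ℝ) * pr μ {ω | u n < Z 1 ω}) atTop (nhds τs))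
    (hνs : Tendsto (fun n : ℕ => (n : ℝ) * pr μ {ω | Z 1 ω ≤ u n ∧ u n < Z 2 ω})
      atTop (nhds νs)) :
    Tendsto (fun n : ℕ => (n : ℝ) * pr μ {ω | u n < Z 1 ω ∧ u n < Z 2 ω})
      atTop (nhds (τs - νs)) := by
  have key : ∀ n : ℕ, pr μ {ω | u n < Z 1 ω ∧ u n < Z 2 ω}
      = pr μ {ω | u n < Z 1 ω} - pr μ {ω | Z 1 ω ≤ u n ∧ u n < Z 2 ω} := by
    intro n
    have hB : MeasurableSet {ω | u n < Z 1 ω} :=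
      measurableSet_lt measurable_const (hZmeas 1)
    have hsplit := pr_split μ hB {ω | u n < Z 2 ω}
    have e1 : {ω | u n < Z 2 ω} ∩ {ω | u n < Z 1 ω} = {ω | u n < Z 1 ω ∧ u n < Z 2 ω} := by
      ext ω; exact and_comm
    have e2 : {ω | u n < Z 2 ω} \ {ω | u n < Z 1 ω} = {ω | Z 1 ω ≤ u n ∧ u n < Z 2 ω} := by
      ext ω; simp [Set.mem_diff, not_lt, and_comm]
    have hst : pr μ {ω | u n < Z 2 ω} = pr μ {ω | u n < Z 1 ω} := by
      unfold pr; rw [stat_e2 μ Z hZmeas hZstat (u n)]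
    rw [e1, e2, hst] at hsplit
    linarith
  apply (hτs.sub hνs).congr
  intro n; rw [key n]; ring

lemma tau_eq_nu_degenerate (Z : ℕ → Ω → ℝ) (u : ℕ → ℝ) (τs νs : ℝ)
    (hZmeas : ∀ i, Measurable (Z i)) (hZstat : IsStationary μ Z)
    (k l : ℕ → ℕ)
    (hktop : Tendsto (fun n => (k n : ℝ)) atTop atTop)
    (hkα : Tendsto (fun n => (k n : ℝ) * alphaMix μ Z (u n) n (l n)) atTop (nhds 0))
    (hkl : Tendsto (fun n => (k n : ℝ) * (l n : ℝ) / (n : ℝ)) atTop (nhds 0))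
    (hev : ∀ᶠ n in atTop, n / k n < 2)
    (hτs : Tendsto (fun n : ℕ => (n : ℝ) * pr μ {ω | u n < Z 1 ω}) atTop (nhds τs))
    (hνs : Tendsto (fun n : ℕ => (n : ℝ) * pr μ {ω | Z 1 ω ≤ u n ∧ u n < Z 2 ω})
      atTop (nhds νs)) :
    τs = νs := by
  -- eventually `n ≤ 2 k n`
  have hk1 : ∀ᶠ n in atTop, 1 ≤ k n := by
    filter_upwards [hktop.eventually_ge_atTop (1 : ℝ)] with n hn
    exact_mod_cast hn
  have hnk : ∀ᶠ n : ℕ in atTop, (n : ℝ) ≤ 2 * k n := by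
    filter_upwards [hev, hk1] with n h1 h2
    have h3 : n < 2 * k n := (Nat.div_lt_iff_lt_mul (by omega)).mp h1
    exact_mod_cast h3.le
  -- eventually `l n = 0`
  have hl0 : ∀ᶠ n in atTop, l n = 0 := by
    have h4 : ∀ᶠ n in atTop, (k n : ℝ) * l n / n < 1 / 2 :=
      hkl.eventually (gt_mem_nhds (by norm_num : (0 : ℝ) < 1 / 2))
    filter_upwards [h4, hnk, eventually_ge_atTop 1] with n h5 h6 h7
    by_contra hne
    have hl1 : (1 : ℝ) ≤ l n := by exact_mod_cast Nat.one_le_iff_ne_zero.mpr hne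
    have hn0 : (0 : ℝ) < n := by exact_mod_cast Nat.lt_of_lt_of_le Nat.zero_lt_one h7
    have hk0 : (0 : ℝ) ≤ k n := by positivity
    have hhalf : (1 : ℝ) / 2 ≤ (k n : ℝ) * l n / n := by
      rw [le_div_iff₀ hn0]
      nlinarith
    linarith
  -- `n • α_{n,0} → 0`
  have hα : Tendsto (fun n : ℕ => (n : ℝ) * alphaMix μ Z (u n) n 0) atTop (nhds 0) := by
    have h2 : Tendsto (fun n => 2 * ((k n : ℝ) * alphaMix μ Z (u n) n (l n)))
        atTop (nhds 0) := by simpa using hkα.const_mul 2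
    apply tendsto_of_tendsto_of_tendsto_of_le_of_le' tendsto_const_nhds h2
    · filter_upwards [eventually_ge_atTop 3] with n hn
      exact mul_nonneg (by positivity) (alpha_nonneg μ Z (u n) n hn)
    · filter_upwards [hl0, hnk, eventually_ge_atTop 3] with n h1 h2 h3
      rw [h1]
      have h4 := alpha_nonneg μ Z (u n) n h3
      nlinarith
  set B2 : ℕ → Set Ω := fun n => {ω | Z 2 ω ≤ u n} with hB2
  set B3 : ℕ → Set Ω := fun n => {ω | Z 3 ω ≤ u n} with hB3
  have habs : ∀ n, 3 ≤ n →
      |pr μ (B2 n ∩ B3 n) - pr μ (B2 n) * pr μ (B3 n)| ≤ alphaMix μ Z (u n) n 0 := by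
    intro n hn
    have h := abs_le_alpha μ Z (u n) n hn
    rwa [maxLE_12, maxLE_23] at h
  have hid : ∀ n, pr μ {ω | Z 2 ω ≤ u n ∧ u n < Z 3 ω}
      - pr μ (B2 n) * pr μ {ω | u n < Z 3 ω}
      = -(pr μ (B2 n ∩ B3 n) - pr μ (B2 n) * pr μ (B3 n)) := by
    intro n
    have hmB3 : MeasurableSet (B3 n) := measurableSet_le (hZmeas 3) measurable_const
    have hsplit := pr_split μ hmB3 (B2 n)
    have e1 : B2 n \ B3 n = {ω | Z 2 ω ≤ u n ∧ u n < Z 3 ω} := by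
      ext ω; simp [hB2, hB3, Set.mem_diff, not_le]
    have hc : pr μ {ω | u n < Z 3 ω} = 1 - pr μ (B3 n) := by
      have e : {ω | u n < Z 3 ω} = (B3 n)ᶜ := by ext ω; simp [hB3, not_le]
      rw [e, pr_compl μ hmB3]
    rw [hc, ← e1]
    ring_nf
    linarith
  -- `n • P(Z₂ ≤ u < Z₃) → ν*`
  have hf : Tendsto (fun n : ℕ => (n : ℝ) * pr μ {ω | Z 2 ω ≤ u n ∧ u n < Z 3 ω})
      atTop (nhds νs) := by
    apply hνs.congr
    intro n
    have : pr μ {ω | Z 1 ω ≤ u n ∧ u n < Z 2 ω} = pr μ {ω | Z 2 ω ≤ u n ∧ u n < Z 3 ω} := by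
      unfold pr; rw [stat_up μ Z hZmeas hZstat (u n)]
    rw [this]
  -- `n • P(Z₂ ≤ u) P(u < Z₃) → τ*`
  have hB2lim : Tendsto (fun n => pr μ (B2 n)) atTop (nhds 1) := by
    have hE0 := exceed_tendsto_zero μ Z u τs hτs
    have hpt : ∀ n, pr μ (B2 n) = 1 - pr μ {ω | u n < Z 1 ω} := by
      intro n
      have e : B2 n = {ω | u n < Z 2 ω}ᶜ := by ext ω; simp [hB2, not_lt]
      rw [e, pr_compl μ (measurableSet_lt measurable_const (hZmeas 2))]
      have : pr μ {ω | u n < Z 2 ω} = pr μ {ω | u n < Z 1 ω} := by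
        unfold pr; rw [stat_e2 μ Z hZmeas hZstat (u n)]
      rw [this]
    have h : Tendsto (fun n : ℕ => 1 - pr μ {ω | u n < Z 1 ω}) atTop (nhds 1) := by
      simpa using (tendsto_const_nhds (x := (1 : ℝ)) (f := (atTop : Filter ℕ))).sub hE0
    apply h.congr
    intro n; rw [hpt n]
  have hZ3 : Tendsto (fun n : ℕ => (n : ℝ) * pr μ {ω | u n < Z 3 ω}) atTop (nhds τs) := by
    apply hτs.congr
    intro n
    have : pr μ {ω | u n < Z 1 ω} = pr μ {ω | u n < Z 3 ω} := by
      unfold pr; rw [stat_e3 μ Z hZmeas hZstat (u n)]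
    rw [this]
  have hg : Tendsto (fun n : ℕ => (n : ℝ) * (pr μ (B2 n) * pr μ {ω | u n < Z 3 ω}))
      atTop (nhds τs) := by
    have h := hB2lim.mul hZ3
    rw [one_mul] at h
    apply h.congr
    intro n; ring
  -- the difference tends to 0
  have hdiff : Tendsto (fun n : ℕ => (n : ℝ) * pr μ {ω | Z 2 ω ≤ u n ∧ u n < Z 3 ω}
      - (n : ℝ) * (pr μ (B2 n) * pr μ {ω | u n < Z 3 ω})) atTop (nhds 0) := by
    have hneg : Tendsto (fun n : ℕ => -((n : ℝ) * alphaMix μ Z (u n) n 0)) atTop (nhds 0) := by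
      simpa using hα.neg
    apply tendsto_of_tendsto_of_tendsto_of_le_of_le' hneg hα
    · filter_upwards [eventually_ge_atTop 3] with n hn
      have h1 := abs_le.mp (habs n hn)
      have h2 := hid n
      have hn0 : (0 : ℝ) ≤ n := by positivity
      nlinarith [h1.1, h1.2]
    · filter_upwards [eventually_ge_atTop 3] with n hn
      have h1 := abs_le.mp (habs n hn)
      have h2 := hid n
      have hn0 : (0 : ℝ) ≤ n := by positivity
      nlinarith [h1.1, h1.2]
  have hf' : Tendsto (fun n : ℕ => (n : ℝ) * pr μ {ω | Z 2 ω ≤ u n ∧ u n < Z 3 ω})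
      atTop (nhds τs) := by
    have h := hdiff.add hg
    rw [zero_add] at h
    apply h.congr
    intro n; ring
  exact (tendsto_nhds_unique hf hf').symm

end Aux

/-- for a stationary sequence satisfying `D^{(2)}(u_n)`,
condition `D^{(1)}(u_n)` holds if and only if the limiting mean number of
exceedances `τ*` equals the limiting mean number of upcrossings `ν*`. -/
theorem condD1_iff_tau_eq_nu
    (μ : Measure Ω) [IsProbabilityMeasure μ]
    (Z : ℕ → Ω → ℝ) (u : ℕ → ℝ) (τs νs : ℝ)
    (hZmeas : ∀ i, Measurable (Z i))
    (hZstat : IsStationary μ Z)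
    (hZD2 : CondDk μ Z u 2)
    (hτs : Tendsto (fun n : ℕ => (n : ℝ) * pr μ {ω | u n < Z 1 ω}) atTop (nhds τs))
    (hνs : Tendsto (fun n : ℕ => (n : ℝ) * pr μ {ω | Z 1 ω ≤ u n ∧ u n < Z 2 ω})
      atTop (nhds νs)) :
    CondDk μ Z u 1 ↔ τs = νs := by
  have hA := tendsto_double μ Z u τs νs hZmeas hZstat hτs hνs
  constructor
  · rintro ⟨k1, ⟨l1, hk1top, hk1α, hk1l⟩, hloc1⟩
    by_cases hfr : ∃ᶠ n in atTop, 2 ≤ n / k1 n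
    · obtain ⟨φ, hφmono, hφ⟩ := Filter.extraction_of_frequently_atTop hfr
      have hA' := hA.comp hφmono.tendsto_atTop
      have hloc' := hloc1.comp hφmono.tendsto_atTop
      have hsq : Tendsto (fun n : ℕ =>
          ((φ n : ℕ) : ℝ) * pr μ {ω | u (φ n) < Z 1 ω ∧ u (φ n) < Z 2 ω})
          atTop (nhds 0) := by
        apply tendsto_of_tendsto_of_tendsto_of_le_of_le tendsto_const_nhds hloc'
        · intro n
          exact mul_nonneg (by positivity) (pr_nonneg μ _)
        · intro n
          apply mul_le_mul_of_nonneg_left _ (by positivity)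
          apply pr_mono μ
          rintro ω ⟨h1, h2⟩
          refine ⟨⟨h1, ?_⟩, ⟨2, ?_, h2⟩⟩
          · intro s hs
            simp at hs
          · simp only [Finset.mem_Icc]
            exact ⟨le_rfl, hφ n⟩
      have := tendsto_nhds_unique hA' hsq
      linarith
    · rw [Filter.not_frequently] at hfr
      exact tau_eq_nu_degenerate μ Z u τs νs hZmeas hZstat k1 l1 hk1top hk1α hk1l
        (hfr.mono fun n hn => by omega) hτs hνs
  · intro hτν
    obtain ⟨k2, hadm, hloc2⟩ := hZD2
    refine ⟨k2, hadm, ?_⟩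
    have hA0 : Tendsto (fun n : ℕ => (n : ℝ) * pr μ {ω | u n < Z 1 ω ∧ u n < Z 2 ω})
        atTop (nhds 0) := by
      rw [hτν, sub_self] at hA
      exact hA
    have hsum := hA0.add hloc2
    rw [add_zero] at hsum
    apply tendsto_of_tendsto_of_tendsto_of_le_of_le tendsto_const_nhds hsum
    · intro n
      exact mul_nonneg (by positivity) (pr_nonneg μ _)
    · intro n
      have hsub : {ω | u n < Z 1 ω} ∩ maxLE Z 1 1 (u n) ∩ maxGT Z 1 (n / k2 n) (u n)
          ⊆ {ω | u n < Z 1 ω ∧ u n < Z 2 ω}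
            ∪ ({ω | u n < Z 1 ω} ∩ maxLE Z 1 2 (u n) ∩ maxGT Z 2 (n / k2 n) (u n)) := by
        rintro ω ⟨⟨h1, -⟩, s, hs, h3⟩
        rcases Finset.mem_Icc.mp hs with ⟨hs1, hs2⟩
        by_cases h2 : u n < Z 2 ω
        · exact Or.inl ⟨h1, h2⟩
        · refine Or.inr ⟨⟨h1, ?_⟩, ⟨s, ?_, h3⟩⟩
          · intro t ht
            rcases Finset.mem_Icc.mp ht with ⟨ht1, ht2⟩
            have : t = 2 := by omega
            subst this
            exact not_lt.mp h2
          · simp only [Finset.mem_Icc]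
            have hs3 : s ≠ 2 := by
              intro h; subst h; exact h2 h3
            omega
      calc (n : ℝ) * pr μ ({ω | u n < Z 1 ω} ∩ maxLE Z 1 1 (u n)
              ∩ maxGT Z 1 (n / k2 n) (u n))
          ≤ (n : ℝ) * (pr μ {ω | u n < Z 1 ω ∧ u n < Z 2 ω}
              + pr μ ({ω | u n < Z 1 ω} ∩ maxLE Z 1 2 (u n) ∩ maxGT Z 2 (n / k2 n) (u n))) := by
            apply mul_le_mul_of_nonneg_left _ (by positivity)
            exact le_trans (pr_mono μ hsub) (pr_union_le μ _ _)
        _ = (n : ℝ) * pr μ {ω | u n < Z 1 ω ∧ u n < Z 2 ω}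
              + (n : ℝ) * pr μ ({ω | u n < Z 1 ω} ∩ maxLE Z 1 2 (u n)
                ∩ maxGT Z 2 (n / k2 n) (u n)) := by ring

end EIPaper
end
end

section
/- Let {X_n} be a stationary sequence and Z_n = M_{I_{n−1},I_n} the cycle sequence for a renewal process S = {I_0 = 0, S_n = I_n − I_{n−1}}_{n≥1} with t ≤ S_n ≤ s for all n. If {Z_n} satisfies condition D^(2)(u_n) with block length r_n = [n/k_n], then {X_n} satisfies condition D^(2s−t+1)(u_n) with the same r_n, i.e. n·P(X_1 > u_n, M_{1,2s−t+1} ≤ u_n < M_{2s−t+1,r_n}) → 0. -/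
open MeasureTheory Filter ProbabilityTheory

noncomputable section

namespace EIPaper

variable {Ω : Type*} [MeasurableSpace Ω]

lemma lt_bmax {X : ℕ → Ω → ℝ} {i j q : ℕ} {u : ℝ} {ω : Ω}
    (hq : q ∈ Finset.Icc (i + 1) j) (h : u < X q ω) : u < bmax X i j ω := by
  have hmem : X q ω ∈ (Finset.Icc (i + 1) j).image fun s => X s ω :=
    Finset.mem_image_of_mem _ hq
  have hne : ((Finset.Icc (i + 1) j).image fun s => X s ω).Nonempty := ⟨_, hmem⟩
  have hle : X q ω ≤ ((Finset.Icc (i + 1) j).image fun s => X s ω).max' hne :=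
    Finset.le_max' _ _ hmem
  unfold bmax
  rw [← Finset.coe_max' hne, WithBot.unbotD_coe]
  exact lt_of_lt_of_le h hle

lemma bmax_le {X : ℕ → Ω → ℝ} {i j : ℕ} {u : ℝ} {ω : Ω} (hij : i < j)
    (h : ∀ q ∈ Finset.Icc (i + 1) j, X q ω ≤ u) : bmax X i j ω ≤ u := by
  have hne : ((Finset.Icc (i + 1) j).image fun s => X s ω).Nonempty := by
    refine Finset.Nonempty.image ⟨j, ?_⟩ _
    rw [Finset.mem_Icc]; omega
  unfold bmax
  rw [← Finset.coe_max' hne, WithBot.unbotD_coe]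
  refine Finset.max'_le _ _ _ ?_
  intro y hy
  obtain ⟨q, hq, rfl⟩ := Finset.mem_image.1 hy
  exact h q hq

lemma measure_shift (μ : Measure Ω) (X : ℕ → Ω → ℝ)
    (hXmeas : ∀ i, Measurable (X i)) (hstat : IsStationary μ X) (m : ℕ)
    {B : Set (ℕ → ℝ)} (hB : MeasurableSet B) :
    μ ((fun ω (j : ℕ) => X (j + m) ω) ⁻¹' B) = μ ((fun ω (j : ℕ) => X j ω) ⁻¹' B) := by
  have h1 : Measurable fun ω => fun j : ℕ => X (j + m) ω :=
    measurable_pi_lambda _ fun j => hXmeas _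
  have h2 : Measurable fun ω => fun j : ℕ => X j ω :=
    measurable_pi_lambda _ fun j => hXmeas _
  rw [← Measure.map_apply h1 hB, ← Measure.map_apply h2 hB, hstat m]

lemma arith_bound {t s : ℕ} (ht : 1 ≤ t) (hts : t ≤ s) :
    2 * s + t - 2 < (2 * s - t + 2) * t := by
  obtain ⟨d, rfl⟩ : ∃ d, s = t + d := ⟨s - t, by omega⟩
  rw [show 2 * (t + d) - t + 2 = t + 2 * d + 2 from by omega]
  have h2 : t ≤ t * t := Nat.le_mul_of_pos_right t ht
  have h3 : 2 * d ≤ 2 * d * t := Nat.le_mul_of_pos_right (2 * d) ht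
  calc 2 * (t + d) + t - 2 < t + 2 * d + 2 * t := by omega
    _ ≤ t * t + 2 * d * t + 2 * t := Nat.add_le_add_right (add_le_add h2 h3) _
    _ = (t + 2 * d + 2) * t := by ring

/-- Proposition 5(a): if the cycle sequence of a renewal process with
spacings in `[t, s]` satisfies `D^{(2)}(u_n)` with `r_n = [n/k_n]`, then `X` satisfies
`D^{(2s-t+1)}(u_n)` with the same `r_n`. -/
theorem X_localDk_of_cycles_localD2
    (μ : Measure Ω) [IsProbabilityMeasure μ]
    (X : ℕ → Ω → ℝ) (u : ℕ → ℝ) (I : ℕ → Ω → ℕ) (t s : ℕ) (kseq : ℕ → ℕ)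
    (ht : 1 ≤ t) (hts : t ≤ s)
    (hXmeas : ∀ i, Measurable (X i))
    (hstat : IsStationary μ X)
    (hI0 : ∀ ω, I 0 ω = 0)
    (hSbd : ∀ (n : ℕ) (ω : Ω), t ≤ I (n + 1) ω - I n ω ∧ I (n + 1) ω - I n ω ≤ s)
    (hadm : AdmissibleK μ (cyc X I) u kseq)
    (hZ2 : LocalDk μ (cyc X I) u 2 (fun n => n / kseq n)) :
    LocalDk μ X u (2 * s - t + 1) (fun n => n / kseq n) := by
  classical
  have hstep : ∀ (m : ℕ) (ω : Ω), I m ω + t ≤ I (m + 1) ω ∧ I (m + 1) ω ≤ I m ω + s := by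
    intro m ω; have h := hSbd m ω; omega
  have hIlb : ∀ (m : ℕ) (ω : Ω), m * t ≤ I m ω := by
    intro m ω
    induction m with
    | zero => simp
    | succ p ih =>
        have h := (hstep p ω).1
        calc (p + 1) * t = p * t + t := by ring
          _ ≤ I p ω + t := Nat.add_le_add_right ih t
          _ ≤ I (p + 1) ω := h
  have hImono : ∀ ω : Ω, Monotone fun m => I m ω := fun ω =>
    monotone_nat_of_le_succ fun m => by have := (hstep m ω).1; omega
  have hI1 : ∀ ω, t ≤ I 1 ω ∧ I 1 ω ≤ s := by
    intro ω
    have h := hstep 0 ω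
    simp only [Nat.zero_add] at h
    have h0 := hI0 ω; omega
  have hI2 : ∀ ω, I 1 ω + t ≤ I 2 ω ∧ I 2 ω ≤ 2 * s := by
    intro ω
    have h1 := hstep 1 ω
    simp only [Nat.reduceAdd] at h1
    have h2 := hI1 ω; omega
  have hfind : ∀ (ω : Ω) (j : ℕ), 1 ≤ j → ∃ m, 1 ≤ m ∧ I (m - 1) ω < j ∧ j ≤ I m ω := by
    intro ω j hj
    have hex : ∃ m, j ≤ I m ω := ⟨j, le_trans (Nat.le_mul_of_pos_right j ht) (hIlb j ω)⟩
    have h0 : Nat.find hex ≠ 0 := by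
      intro h
      have hsp := Nat.find_spec hex
      rw [h, hI0 ω] at hsp; omega
    refine ⟨Nat.find hex, by omega, ?_, Nat.find_spec hex⟩
    have := Nat.find_min hex (show Nat.find hex - 1 < Nat.find hex by omega)
    omega
  set k := 2 * s - t + 1 with hk
  set r := fun n : ℕ => n / kseq n with hr
  have key : ∀ n : ℕ, (n : ℝ) *
      pr μ ({ω | u n < X 1 ω} ∩ maxLE X 1 k (u n) ∩ maxGT X k (r n) (u n))
      ≤ (t : ℝ) * ((n : ℝ) *
        pr μ ({ω | u n < cyc X I 1 ω} ∩ maxLE (cyc X I) 1 2 (u n)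
          ∩ maxGT (cyc X I) 2 (r n) (u n))) := by
    intro n
    set u' := u n with hu'
    set E : Set Ω := {ω | u' < cyc X I 1 ω} ∩ maxLE (cyc X I) 1 2 u'
      ∩ maxGT (cyc X I) 2 (r n) u' with hE
    have hprE : (0 : ℝ) ≤ pr μ E := ENNReal.toReal_nonneg
    rcases Nat.lt_or_ge (r n) (k + 1) with hsmall | hbig
    · have hempty : maxGT X k (r n) u' = (∅ : Set Ω) := by
        ext ω
        simp only [maxGT, Set.mem_setOf_eq, Set.mem_empty_iff_false, iff_false]
        rintro ⟨j, hj, -⟩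
        rw [Finset.mem_Icc] at hj; omega
      have hA : {ω | u' < X 1 ω} ∩ maxLE X 1 k u' ∩ maxGT X k (r n) u' = (∅ : Set Ω) := by
        rw [hempty, Set.inter_empty]
      rw [hA]
      have h0 : pr μ (∅ : Set Ω) = 0 := by simp [pr]
      rw [h0, mul_zero]
      exact mul_nonneg (Nat.cast_nonneg t) (mul_nonneg (Nat.cast_nonneg n) hprE)
    · -- main case
      set B : ℕ → Set (ℕ → ℝ) := fun i =>
        {f | u' < f 1 ∧ (∀ j ∈ Finset.Icc (1 + 1) k, f j ≤ u') ∧ u' < f i} with hB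
      set D : ℕ → Set Ω := fun i => (fun ω (j : ℕ) => X j ω) ⁻¹' B i with hD
      set G : ℕ → Set Ω := fun i => (fun ω (j : ℕ) => X (j + (t - 1)) ω) ⁻¹' B i with hG
      have hsub : {ω | u' < X 1 ω} ∩ maxLE X 1 k u' ∩ maxGT X k (r n) u'
          ⊆ E ∪ ⋃ i ∈ Finset.Icc (k + 1) (2 * s), D i := by
        rintro ω ⟨⟨hx1, hle⟩, hgt⟩
        by_cases hcase : ∀ q ∈ Finset.Icc (I 1 ω + 1) (I 2 ω), X q ω ≤ u'
        · left
          rw [hE]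
          refine ⟨⟨?_, ?_⟩, ?_⟩
          · show u' < bmax X (I 0 ω) (I 1 ω) ω
            refine lt_bmax ?_ hx1
            rw [Finset.mem_Icc]
            have h0 := hI0 ω; have h1 := hI1 ω; omega
          · intro s' hs'
            rw [Finset.mem_Icc] at hs'
            have hs2 : s' = 2 := by omega
            subst hs2
            show bmax X (I 1 ω) (I 2 ω) ω ≤ u'
            exact bmax_le (by have := hI2 ω; omega) hcase
          · obtain ⟨j, hjmem, hjgt⟩ := hgt
            rw [Finset.mem_Icc] at hjmem
            obtain ⟨m, hm1, hmlt, hmle⟩ := hfind ω j (by omega)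
            have hI1' := hI1 ω
            have hI2' := hI2 ω
            have hm3 : 3 ≤ m := by
              by_contra hcon
              push_neg at hcon
              have hmle2 : I m ω ≤ I 2 ω := hImono ω (by omega)
              have hj2 : j ≤ I 2 ω := le_trans hmle hmle2
              have hxle : X j ω ≤ u' := hcase j (Finset.mem_Icc.2 (by omega))
              exact absurd hjgt (not_lt.2 hxle)
            have hmj : m ≤ j := by
              have h1 : m - 1 ≤ (m - 1) * t := Nat.le_mul_of_pos_right _ ht
              have h2 := hIlb (m - 1) ω
              have h3 : m - 1 ≤ I (m - 1) ω := le_trans h1 h2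
              omega
            refine ⟨m, Finset.mem_Icc.2 ⟨hm3, by omega⟩, ?_⟩
            show u' < bmax X (I (m - 1) ω) (I m ω) ω
            exact lt_bmax (Finset.mem_Icc.2 (by omega)) hjgt
        · right
          push_neg at hcase
          obtain ⟨i, himem, hi⟩ := hcase
          rw [Finset.mem_Icc] at himem
          have hI1' := hI1 ω
          have hI2' := hI2 ω
          have hik : k + 1 ≤ i := by
            by_contra hcon
            push_neg at hcon
            have hxle : X i ω ≤ u' := hle i (Finset.mem_Icc.2 (by omega))
            exact absurd hi (not_lt.2 hxle)
          refine Set.mem_iUnion₂.2 ⟨i, Finset.mem_Icc.2 ⟨hik, by omega⟩, ?_⟩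
          rw [hD]
          exact ⟨hx1, hle, hi⟩
      have hGE : ∀ i ∈ Finset.Icc (k + 1) (2 * s), G i ⊆ E := by
        intro i hi ω hω
        rw [Finset.mem_Icc] at hi
        rw [hG] at hω
        obtain ⟨hxt, hmid, hwit⟩ := hω
        have hxt' : u' < X (1 + (t - 1)) ω := hxt
        rw [show 1 + (t - 1) = t from by omega] at hxt'
        have hwit' : u' < X (i + (t - 1)) ω := hwit
        have hI1' := hI1 ω
        have hI2' := hI2 ω
        rw [hE]
        refine ⟨⟨?_, ?_⟩, ?_⟩
        · show u' < bmax X (I 0 ω) (I 1 ω) ω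
          refine lt_bmax ?_ hxt'
          rw [Finset.mem_Icc]
          have h0 := hI0 ω; omega
        · intro s' hs'
          rw [Finset.mem_Icc] at hs'
          have hs2 : s' = 2 := by omega
          subst hs2
          show bmax X (I 1 ω) (I 2 ω) ω ≤ u'
          refine bmax_le (by omega) ?_
          intro q hq
          rw [Finset.mem_Icc] at hq
          have h3 : X (q - (t - 1) + (t - 1)) ω ≤ u' :=
            hmid (q - (t - 1)) (Finset.mem_Icc.2 (by omega))
          rwa [show q - (t - 1) + (t - 1) = q from by omega] at h3
        · obtain ⟨m, hm1, hmlt, hmle⟩ := hfind ω (i + (t - 1)) (by omega)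
          have hm3 : 3 ≤ m := by
            by_contra hcon
            push_neg at hcon
            have hmle2 : I m ω ≤ I 2 ω := hImono ω (by omega)
            omega
          have hmk : m ≤ k + 1 := by
            by_contra hcon
            push_neg at hcon
            have h1 : (2 * s - t + 2) * t ≤ (m - 1) * t :=
              Nat.mul_le_mul_right t (by omega)
            have h2 := hIlb (m - 1) ω
            have h3 : I (m - 1) ω ≤ 2 * s + t - 2 := by omega
            have h4 := arith_bound ht hts
            have h5 : (2 * s - t + 2) * t ≤ 2 * s + t - 2 :=
              le_trans h1 (le_trans h2 h3)
            exact absurd h5 (not_le.2 h4)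
          refine ⟨m, Finset.mem_Icc.2 ⟨hm3, by omega⟩, ?_⟩
          show u' < bmax X (I (m - 1) ω) (I m ω) ω
          exact lt_bmax (Finset.mem_Icc.2 (by omega)) hwit'
      have hBmeas : ∀ i, MeasurableSet (B i) := by
        intro i
        rw [hB]
        have h2 : MeasurableSet {f : ℕ → ℝ | ∀ j ∈ Finset.Icc (1 + 1) k, f j ≤ u'} := by
          have he : {f : ℕ → ℝ | ∀ j ∈ Finset.Icc (1 + 1) k, f j ≤ u'}
              = ⋂ j ∈ Finset.Icc (1 + 1) k, {f : ℕ → ℝ | f j ≤ u'} := by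
            ext f; simp
          rw [he]
          exact MeasurableSet.iInter fun j => MeasurableSet.iInter fun _ =>
            measurableSet_le (measurable_pi_apply j) measurable_const
        exact (measurableSet_lt measurable_const (measurable_pi_apply 1)).inter
          (h2.inter (measurableSet_lt measurable_const (measurable_pi_apply i)))
      have hDG : ∀ i, μ (D i) = μ (G i) := by
        intro i
        rw [hD, hG]
        exact (measure_shift μ X hXmeas hstat (t - 1) (hBmeas i)).symm
      have hcard : (Finset.Icc (k + 1) (2 * s)).card = t - 1 := by
        rw [Nat.card_Icc]; omega
      have hmain : μ ({ω | u' < X 1 ω} ∩ maxLE X 1 k u' ∩ maxGT X k (r n) u')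
          ≤ (t : ENNReal) * μ E := by
        calc μ ({ω | u' < X 1 ω} ∩ maxLE X 1 k u' ∩ maxGT X k (r n) u')
            ≤ μ (E ∪ ⋃ i ∈ Finset.Icc (k + 1) (2 * s), D i) := measure_mono hsub
          _ ≤ μ E + μ (⋃ i ∈ Finset.Icc (k + 1) (2 * s), D i) := measure_union_le _ _
          _ ≤ μ E + ∑ i ∈ Finset.Icc (k + 1) (2 * s), μ (D i) :=
              add_le_add (le_refl _) (measure_biUnion_finset_le _ _)
          _ = μ E + ∑ i ∈ Finset.Icc (k + 1) (2 * s), μ (G i) := by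
              exact congrArg _ (Finset.sum_congr rfl fun i _ => hDG i)
          _ ≤ μ E + ∑ i ∈ Finset.Icc (k + 1) (2 * s), μ E :=
              add_le_add (le_refl _) (Finset.sum_le_sum fun i hi => measure_mono (hGE i hi))
          _ = μ E + (t - 1 : ℕ) • μ E := by rw [Finset.sum_const, hcard]
          _ = ((1 + (t - 1) : ℕ)) • μ E := by rw [add_nsmul, one_nsmul]
          _ = (t : ℕ) • μ E := by congr 1; omega
          _ = (t : ENNReal) * μ E := by rw [nsmul_eq_mul]
      have htop : (t : ENNReal) * μ E ≠ ⊤ :=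
        ENNReal.mul_ne_top (ENNReal.natCast_ne_top t) (measure_ne_top μ E)
      have hreal : pr μ ({ω | u' < X 1 ω} ∩ maxLE X 1 k u' ∩ maxGT X k (r n) u')
          ≤ (t : ℝ) * pr μ E := by
        have h := ENNReal.toReal_mono htop hmain
        rw [ENNReal.toReal_mul, ENNReal.toReal_natCast] at h
        exact h
      calc (n : ℝ) * pr μ ({ω | u' < X 1 ω} ∩ maxLE X 1 k u' ∩ maxGT X k (r n) u')
          ≤ (n : ℝ) * ((t : ℝ) * pr μ E) :=
            mul_le_mul_of_nonneg_left hreal (Nat.cast_nonneg n)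
        _ = (t : ℝ) * ((n : ℝ) * pr μ E) := by ring
  unfold LocalDk at hZ2 ⊢
  refine squeeze_zero (fun n => mul_nonneg (Nat.cast_nonneg n) ENNReal.toReal_nonneg) key ?_
  have h := hZ2.const_mul (t : ℝ)
  simpa using h

end EIPaper
end
end

section
/- Let {X_n} be a stationary sequence and Z_n = M_{I_{n−1},I_n} the cycle sequence for a renewal process S = {I_0 = 0, S_n = I_n − I_{n−1}}_{n≥1} with t ≤ S_n ≤ s for all n and 2t > s. If {X_n} satisfies condition D^(k)(u_n) for some k ≤ 2t − s + 1 with block length r_n = [n/k_n], then {Z_n} satisfies condition D^(2)(u_n) with block length r_n* = [r_n/s], i.e. n·P(Z_1 > u_n, Z_2 ≤ u_n < max_{i=3,…,r_n*} Z_i) → 0. -/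
open MeasureTheory Filter ProbabilityTheory

noncomputable section

namespace EIPaper

variable {Ω : Type*} [MeasurableSpace Ω]

lemma lt_bmax_iff {X : ℕ → Ω → ℝ} {i j : ℕ} (h : i < j) (ω : Ω) (u : ℝ) :
    u < bmax X i j ω ↔ ∃ p ∈ Finset.Icc (i + 1) j, u < X p ω := by
  have hne : ((Finset.Icc (i + 1) j).image fun p => X p ω).Nonempty :=
    Finset.Nonempty.image (by rw [Finset.nonempty_Icc]; omega) _
  rw [bmax, ← Finset.coe_max' hne]
  simp only [WithBot.unbotD_coe]
  constructor
  · intro hlt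
    obtain ⟨p, hp, he⟩ := Finset.mem_image.1 (Finset.max'_mem _ hne)
    exact ⟨p, hp, he ▸ hlt⟩
  · rintro ⟨p, hp, hup⟩
    exact lt_of_lt_of_le hup
      (Finset.le_max' (Finset.image (fun q => X q ω) (Finset.Icc (i + 1) j)) (X p ω)
        (Finset.mem_image_of_mem _ hp))

lemma le_of_bmax_le {X : ℕ → Ω → ℝ} {i j : ℕ} {ω : Ω} {u : ℝ}
    (h : bmax X i j ω ≤ u) {p : ℕ} (hp : p ∈ Finset.Icc (i + 1) j) : X p ω ≤ u := by
  have hne : ((Finset.Icc (i + 1) j).image fun q => X q ω).Nonempty :=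
    ⟨X p ω, Finset.mem_image_of_mem _ hp⟩
  rw [bmax, ← Finset.coe_max' hne] at h
  simp only [WithBot.unbotD_coe] at h
  exact le_trans
    (Finset.le_max' (Finset.image (fun q => X q ω) (Finset.Icc (i + 1) j)) (X p ω)
      (Finset.mem_image_of_mem _ hp)) h

/-- Proposition 5(b): if `2t > s` and `X` satisfies `D^{(k)}(u_n)` for
some `k ≤ 2t - s + 1` with `r_n = [n/k_n]`, then the cycle sequence of a renewal process
with spacings in `[t, s]` satisfies `D^{(2)}(u_n)` with `r_n* = [r_n/s]`. -/
theorem cycles_localD2_of_X_localDk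
    (μ : Measure Ω) [IsProbabilityMeasure μ]
    (X : ℕ → Ω → ℝ) (u : ℕ → ℝ) (I : ℕ → Ω → ℕ) (t s k : ℕ) (kseq : ℕ → ℕ)
    (ht : 1 ≤ t) (hts : t ≤ s) (hst : s < 2 * t) (hk : k ≤ 2 * t - s + 1)
    (hXmeas : ∀ i, Measurable (X i))
    (hstat : IsStationary μ X)
    (hI0 : ∀ ω, I 0 ω = 0)
    (hSbd : ∀ (n : ℕ) (ω : Ω), t ≤ I (n + 1) ω - I n ω ∧ I (n + 1) ω - I n ω ≤ s)
    (hadm : AdmissibleK μ X u kseq)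
    (hXk : LocalDk μ X u k (fun n => n / kseq n)) :
    LocalDk μ (cyc X I) u 2 (fun n => n / kseq n / s) := by
  classical
  set rn : ℕ → ℕ := fun n => n / kseq n with hrn
  set Dset : ℕ → Set Ω := fun n =>
    {ω | u n < X 1 ω} ∩ maxLE X 1 k (u n) ∩ maxGT X k (rn n) (u n) with hDset
  set C : ℕ → ℕ → Set Ω := fun n m =>
    {ω | u n < X (m + 1) ω} ∩ maxLE X (m + 1) (k + m) (u n)
      ∩ maxGT X (k + m) (rn n + m) (u n) with hCdef
  set E : ℕ → Set Ω := fun n =>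
    {ω | u n < cyc X I 1 ω} ∩ maxLE (cyc X I) 1 2 (u n)
      ∩ maxGT (cyc X I) 2 (rn n / s) (u n) with hEdef
  -- basic facts about the renewal times
  have hIstep : ∀ (m : ℕ) (ω : Ω), I m ω + t ≤ I (m + 1) ω ∧ I (m + 1) ω ≤ I m ω + s := by
    intro m ω; have := hSbd m ω; omega
  have hIub : ∀ (m : ℕ) (ω : Ω), I m ω ≤ m * s := by
    intro m ω
    induction m with
    | zero => simp [hI0]
    | succ p ih => have h := (hIstep p ω).2; rw [Nat.succ_mul]; omega
  have hImono : ∀ (ω : Ω) (a b : ℕ), a ≤ b → I a ω ≤ I b ω := by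
    intro ω a b hab
    induction b, hab using Nat.le_induction with
    | base => exact le_rfl
    | succ p hp ih => have h := (hIstep p ω).1; omega
  -- key combinatorial inclusion
  have hsub : ∀ n, E n ⊆ ⋃ m ∈ Finset.range s, C n m := by
    intro n ω hω
    obtain ⟨⟨h1, h2⟩, h3⟩ := hω
    have hI1lb : t ≤ I 1 ω := by
      have h : I 0 ω + t ≤ I 1 ω := (hIstep 0 ω).1
      have h0 := hI0 ω; omega
    have hI1ub : I 1 ω ≤ s := by
      have h : I 1 ω ≤ I 0 ω + s := (hIstep 0 ω).2
      have h0 := hI0 ω; omega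
    have hI2 : I 1 ω + t ≤ I 2 ω := (hIstep 1 ω).1
    -- Z₁ > u
    have h1' : ∃ p ∈ Finset.Icc 1 (I 1 ω), u n < X p ω := by
      have hb : u n < bmax X 0 (I 1 ω) ω := by
        have : u n < cyc X I 1 ω := h1
        rwa [cyc, hI0 ω] at this
      simpa using (lt_bmax_iff (by omega) ω (u n)).1 hb
    -- Z₂ ≤ u
    have h2' : ∀ p ∈ Finset.Icc (I 1 ω + 1) (I 2 ω), X p ω ≤ u n := by
      intro p hp
      have hZ2 : cyc X I 2 ω ≤ u n := h2 2 (by simp)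
      exact le_of_bmax_le (by rwa [cyc] at hZ2) hp
    -- some later cycle exceeds u
    obtain ⟨m', hm', hZm'⟩ := h3
    rw [Finset.mem_Icc] at hm'
    have hm'1 : m' - 1 + 1 = m' := by omega
    have hIm'lt : I (m' - 1) ω < I m' ω := by
      have h : I (m' - 1) ω + t ≤ I (m' - 1 + 1) ω := (hIstep (m' - 1) ω).1
      rw [hm'1] at h; omega
    obtain ⟨j, hjmem, hj⟩ := (lt_bmax_iff hIm'lt ω (u n)).1 (by rwa [cyc] at hZm')
    rw [Finset.mem_Icc] at hjmem
    have hjlb : I 2 ω < j := by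
      have h := hImono ω 2 (m' - 1) (by omega); omega
    have hjub : j ≤ rn n := by
      have h1 := hIub m' ω
      have h2 : m' * s ≤ (rn n / s) * s := Nat.mul_le_mul_right s hm'.2
      have h3 : (rn n / s) * s ≤ rn n := Nat.div_mul_le_self _ _
      omega
    -- choose the largest exceedance index in the first cycle
    set T : Finset ℕ := (Finset.Icc 1 (I 1 ω)).filter (fun p => u n < X p ω) with hT
    have hTne : T.Nonempty := by
      obtain ⟨p, hp, hup⟩ := h1'
      exact ⟨p, Finset.mem_filter.2 ⟨hp, hup⟩⟩
    set i : ℕ := T.max' hTne with hi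
    have hiT := T.max'_mem hTne
    rw [Finset.mem_filter, Finset.mem_Icc] at hiT
    obtain ⟨⟨hi1, hiI1⟩, hiu⟩ := hiT
    have hmaxi : ∀ p, 1 ≤ p → p ≤ I 1 ω → u n < X p ω → p ≤ i := by
      intro p hp1 hp2 hup
      exact Finset.le_max' T p (Finset.mem_filter.2 ⟨Finset.mem_Icc.2 ⟨hp1, hp2⟩, hup⟩)
    have hI22t : 2 * t ≤ I 2 ω := by omega
    refine Set.mem_biUnion (show i - 1 ∈ Finset.range s from Finset.mem_range.2 (by omega)) ?_
    have hi11 : i - 1 + 1 = i := by omega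
    refine ⟨⟨?_, ?_⟩, ?_⟩
    · show u n < X (i - 1 + 1) ω
      rwa [hi11]
    · intro p hp
      rw [Finset.mem_Icc] at hp
      by_cases hpI1 : p ≤ I 1 ω
      · by_contra hgt
        push_neg at hgt
        have := hmaxi p (by omega) hpI1 hgt
        omega
      · exact h2' p (Finset.mem_Icc.2 ⟨by omega, by omega⟩)
    · exact ⟨j, Finset.mem_Icc.2 ⟨by omega, by omega⟩, hj⟩
  -- stationarity: all shifted blocks have the same probability
  have hCmeas_eq : ∀ n m, μ (C n m) = μ (Dset n) := by
    intro n m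
    set B : Set (ℕ → ℝ) :=
      ({f : ℕ → ℝ | u n < f 1} ∩ (⋂ j ∈ Finset.Icc 2 k, {f : ℕ → ℝ | f j ≤ u n}))
        ∩ (⋃ j ∈ Finset.Icc (k + 1) (rn n), {f : ℕ → ℝ | u n < f j}) with hB
    have hBmeas : MeasurableSet B := by
      refine ((measurableSet_lt measurable_const (measurable_pi_apply 1)).inter
        (MeasurableSet.biInter (Finset.Icc 2 k).countable_toSet fun j _ =>
          measurableSet_le (measurable_pi_apply j) measurable_const)).inter
        (MeasurableSet.biUnion (Finset.Icc (k + 1) (rn n)).countable_toSet fun j _ =>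
          measurableSet_lt measurable_const (measurable_pi_apply j))
    have hshift : ∀ m : ℕ, Measurable fun ω => (fun i : ℕ => X (i + m) ω) := fun m =>
      measurable_pi_lambda _ fun i => hXmeas (i + m)
    have hpre : ∀ m : ℕ, (fun ω => fun i : ℕ => X (i + m) ω) ⁻¹' B = C n m := by
      intro m
      ext ω
      simp only [hB, hCdef, Set.mem_preimage, Set.mem_inter_iff, Set.mem_setOf_eq,
        Set.mem_iInter, Set.mem_iUnion, Finset.mem_Icc, maxLE, maxGT, exists_prop]
      constructor
      · rintro ⟨⟨hf1, hf2⟩, j, hj, hfj⟩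
        refine ⟨⟨by rwa [show 1 + m = m + 1 by omega] at hf1, ?_⟩,
          ⟨j + m, ⟨by omega, by omega⟩, hfj⟩⟩
        intro p hp
        have h := hf2 (p - m) ⟨by omega, by omega⟩
        rwa [show p - m + m = p by omega] at h
      · rintro ⟨⟨h1, h2⟩, p, hp, hXp⟩
        refine ⟨⟨by rwa [show 1 + m = m + 1 by omega], ?_⟩,
          ⟨p - m, ⟨by omega, by omega⟩, by rwa [show p - m + m = p by omega]⟩⟩
        intro j hj
        exact h2 (j + m) ⟨by omega, by omega⟩
    calc μ (C n m) = μ ((fun ω => fun i : ℕ => X (i + m) ω) ⁻¹' B) := by rw [hpre m]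
      _ = Measure.map (fun ω => fun i : ℕ => X (i + m) ω) μ B :=
          (Measure.map_apply (hshift m) hBmeas).symm
      _ = Measure.map (fun ω => fun i : ℕ => X i ω) μ B := by rw [hstat m]
      _ = μ ((fun ω => fun i : ℕ => X i ω) ⁻¹' B) :=
          Measure.map_apply (measurable_pi_lambda _ fun i => hXmeas i) hBmeas
      _ = μ (C n 0) := by
          rw [show (fun ω => fun i : ℕ => X i ω) = (fun ω => fun i : ℕ => X (i + 0) ω) from rfl,
            hpre 0]
      _ = μ (Dset n) := rfl
  -- probability bound
  have hbound : ∀ n, μ (E n) ≤ s * μ (Dset n) := by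
    intro n
    calc μ (E n) ≤ μ (⋃ m ∈ Finset.range s, C n m) := measure_mono (hsub n)
      _ ≤ ∑ m ∈ Finset.range s, μ (C n m) := measure_biUnion_finset_le _ _
      _ = ∑ m ∈ Finset.range s, μ (Dset n) := Finset.sum_congr rfl fun m _ => hCmeas_eq n m
      _ = s * μ (Dset n) := by rw [Finset.sum_const, Finset.card_range, nsmul_eq_mul]
  have hreal : ∀ n, pr μ (E n) ≤ (s : ℝ) * pr μ (Dset n) := by
    intro n
    have htop : (s : ENNReal) * μ (Dset n) ≠ ⊤ :=
      ENNReal.mul_ne_top (ENNReal.natCast_ne_top s) (measure_ne_top μ _)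
    have h := ENNReal.toReal_mono htop (hbound n)
    rwa [ENNReal.toReal_mul, ENNReal.toReal_natCast] at h
  -- conclude by squeezing
  have hXk' : Tendsto (fun n : ℕ => (n : ℝ) * pr μ (Dset n)) atTop (nhds 0) := hXk
  have hlim : Tendsto (fun n : ℕ => (s : ℝ) * ((n : ℝ) * pr μ (Dset n))) atTop (nhds 0) := by
    simpa using hXk'.const_mul (s : ℝ)
  show Tendsto (fun n : ℕ => (n : ℝ) * pr μ (E n)) atTop (nhds 0)
  refine squeeze_zero (fun n => mul_nonneg (Nat.cast_nonneg n) ENNReal.toReal_nonneg)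
    (fun n => ?_) hlim
  have := hreal n
  have hn : (0 : ℝ) ≤ (n : ℝ) := Nat.cast_nonneg n
  calc (n : ℝ) * pr μ (E n) ≤ (n : ℝ) * ((s : ℝ) * pr μ (Dset n)) :=
        mul_le_mul_of_nonneg_left this hn
    _ = (s : ℝ) * ((n : ℝ) * pr μ (Dset n)) := by ring

end EIPaper
end
end

section
/- Let {X_n} be a moving maxima process X_n = sup_{l≥1} sup_{−∞<j<∞} α_{l,j}·Y_{l,n−j} with {Y_{l,j}} i.i.d. unit Fréchet and Σ_{l,j} α_{l,j} = 1. Then for every τ > 0 and every k ≥ 2, with r_n = [n/k_n] for integers k_n → ∞ with k_n/n → 0, lim_{n→∞} n·P( X_1 > n/τ, max_{s=2,…,k} X_s ≤ n/τ, max_{s=k+1,…,r_n} X_s > n/τ ) = τ · Σ_{l≥1} Σ_{−∞<j<∞} [ min(α_{l,j}, sup_{s≥k+1} α_{l,j+s−1}) − min(α_{l,j}, max_{s=2,…,k} α_{l,j+s−1}, sup_{s≥k+1} α_{l,j+s−1}) ]. -/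
open MeasureTheory Filter ProbabilityTheory

noncomputable section

namespace EIPaper

variable {Ω : Type*} [MeasurableSpace Ω]

section MM

variable (μ : Measure Ω) [IsProbabilityMeasure μ] (Y : ℕ → ℤ → Ω → ℝ)

lemma cdf_eq (hYfrechet : ∀ (l : ℕ) (j : ℤ) (y : ℝ), 0 < y →
      pr μ {ω | Y l j ω ≤ y} = Real.exp (-(1 / y)))
    (l : ℕ) (j : ℤ) (y : ℝ) (hy : 0 < y) :
    μ {ω | Y l j ω ≤ y} = ENNReal.ofReal (Real.exp (-(1 / y))) := by
  rw [← hYfrechet l j y hy, pr, ENNReal.ofReal_toReal (measure_ne_top μ _)]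

lemma single_eq (hYfrechet : ∀ (l : ℕ) (j : ℤ) (y : ℝ), 0 < y →
      pr μ {ω | Y l j ω ≤ y} = Real.exp (-(1 / y)))
    (w : ℝ) (hw : 0 ≤ w) (u : ℝ) (hu : 0 < u) (l : ℕ) (j : ℤ) :
    μ {ω | w * Y l j ω ≤ u} = ENNReal.ofReal (Real.exp (-(w / u))) := by
  rcases eq_or_lt_of_le hw with h0 | hpos
  · have : {ω | w * Y l j ω ≤ u} = Set.univ := by
      ext ω; simp [← h0, hu.le]
    rw [this, measure_univ, ← h0]
    simp [Real.exp_zero]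
  · have hset : {ω | w * Y l j ω ≤ u} = {ω | Y l j ω ≤ u / w} := by
      ext ω; rw [Set.mem_setOf_eq, Set.mem_setOf_eq, le_div_iff₀ hpos, mul_comm]
    rw [hset, cdf_eq μ Y hYfrechet l j _ (div_pos hu hpos)]
    congr 2
    rw [one_div_div]

/-- measure of the countable intersection of the independent events. -/
lemma meas_iInter_eq (hYmeas : ∀ l j, Measurable (Y l j))
    (hYindep : iIndepFun (fun q : ℕ × ℤ => Y q.1 q.2) μ)
    (hYfrechet : ∀ (l : ℕ) (j : ℤ) (y : ℝ), 0 < y →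
      pr μ {ω | Y l j ω ≤ y} = Real.exp (-(1 / y)))
    (w : ℕ × ℤ → ℝ) (hw : ∀ q, 0 ≤ w q) (hsumw : Summable w) (u : ℝ) (hu : 0 < u) :
    μ (⋂ q : ℕ × ℤ, {ω | w q * Y q.1 q.2 ω ≤ u})
      = ENNReal.ofReal (Real.exp (-((∑' q, w q) / u))) := by
  classical
  set e : ℕ ≃ ℕ × ℤ := (Denumerable.eqv (ℕ × ℤ)).symm with he
  set T : ℕ × ℤ → Set Ω := fun q => {ω | w q * Y q.1 q.2 ω ≤ u} with hT
  have hTmeas : ∀ q, MeasurableSet (T q) := fun q =>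
    measurableSet_le (measurable_const.mul (hYmeas q.1 q.2)) measurable_const
  set D : ℕ → Set Ω := fun N => ⋂ m ∈ Finset.range N, T (e m) with hD
  have hiInter : (⋂ q, T q) = ⋂ N, D N := by
    apply Set.Subset.antisymm
    · exact Set.subset_iInter fun N => Set.subset_iInter₂ fun m _ => Set.iInter_subset _ _
    · intro ω hω
      refine Set.mem_iInter.2 fun q => ?_
      have h1 := Set.mem_iInter.1 hω (e.symm q + 1)
      have h2 := Set.mem_iInter₂.1 h1 (e.symm q) (by simp [Finset.mem_range])
      simpa using h2
  have hDmeas : ∀ N, MeasurableSet (D N) := fun N =>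
    MeasurableSet.biInter (Finset.range N).countable_toSet fun m _ => hTmeas _
  have hDanti : Antitone D := by
    intro a b hab
    exact Set.biInter_subset_biInter_left (by exact_mod_cast Finset.range_subset_range.2 hab)
  have hprod : ∀ N, μ (D N) = ENNReal.ofReal
      (Real.exp (-((∑ m ∈ Finset.range N, w (e m)) / u))) := by
    intro N
    have hind := hYindep.measure_inter_preimage_eq_mul ((Finset.range N).image e)
      (sets := fun q => {y : ℝ | w q * y ≤ u})
      (fun q _ => measurableSet_le (measurable_id.const_mul _) measurable_const)
    have hDeq : D N = ⋂ q ∈ (Finset.range N).image e,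
        (fun q : ℕ × ℤ => Y q.1 q.2) q ⁻¹' {y : ℝ | w q * y ≤ u} := by
      simp only [Finset.set_biInter_finset_image]
      rfl
    rw [hDeq, hind, Finset.prod_image (fun a _ b _ h => e.injective h)]
    have : ∀ m, μ ((fun q : ℕ × ℤ => Y q.1 q.2) (e m) ⁻¹' {y : ℝ | w (e m) * y ≤ u})
        = ENNReal.ofReal (Real.exp (-(w (e m) / u))) := by
      intro m
      exact single_eq μ Y hYfrechet _ (hw _) u hu (e m).1 (e m).2
    rw [Finset.prod_congr rfl fun m _ => this m,
      ← ENNReal.ofReal_prod_of_nonneg (fun i _ => (Real.exp_pos _).le),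
      ← Real.exp_sum]
    congr 2
    rw [Finset.sum_neg_distrib, Finset.sum_div]
  -- convergence of partial sums
  have hsum_e : Summable (fun m => w (e m)) := e.summable_iff.mpr hsumw
  have htsum_e : ∑' m, w (e m) = ∑' q, w q := e.tsum_eq w
  have hS : Tendsto (fun N => ∑ m ∈ Finset.range N, w (e m)) atTop (nhds (∑' q, w q)) := by
    rw [← htsum_e]; exact hsum_e.hasSum.tendsto_sum_nat
  have hlim1 : Tendsto (μ ∘ D) atTop (nhds (μ (⋂ N, D N))) :=
    tendsto_measure_iInter_atTop (fun N => (hDmeas N).nullMeasurableSet) hDanti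
      ⟨0, measure_ne_top μ _⟩
  have hlim2 : Tendsto (μ ∘ D) atTop
      (nhds (ENNReal.ofReal (Real.exp (-((∑' q, w q) / u))))) := by
    have : (μ ∘ D) = fun N => ENNReal.ofReal
        (Real.exp (-((∑ m ∈ Finset.range N, w (e m)) / u))) := funext fun N => hprod N
    rw [this]
    exact (ENNReal.continuous_ofReal.tendsto _).comp
      ((Real.continuous_exp.tendsto _).comp ((hS.div_const u).neg))
  rw [hiInter]
  exact tendsto_nhds_unique hlim1 hlim2

/-- a.s. boundedness of the weighted family. -/
lemma unbdd_null (hYmeas : ∀ l j, Measurable (Y l j))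
    (hYfrechet : ∀ (l : ℕ) (j : ℤ) (y : ℝ), 0 < y →
      pr μ {ω | Y l j ω ≤ y} = Real.exp (-(1 / y)))
    (w : ℕ × ℤ → ℝ) (hw : ∀ q, 0 ≤ w q) (hsumw : Summable w) :
    μ {ω | ¬ BddAbove (Set.range fun q : ℕ × ℤ => w q * Y q.1 q.2 ω)} = 0 := by
  classical
  set A : ℕ × ℤ → Set Ω := fun q => {ω | 1 < w q * Y q.1 q.2 ω} with hA
  have hAle : ∀ q, μ (A q) ≤ ENNReal.ofReal (w q) := by
    intro q
    rcases eq_or_lt_of_le (hw q) with h0 | hpos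
    · have : A q = ∅ := by
        ext ω; simp [hA, ← h0]
      simp [this]
    · rcases le_or_gt 1 (w q) with h1 | h1
      · calc μ (A q) ≤ 1 := prob_le_one
          _ ≤ ENNReal.ofReal (w q) := by
              rw [← ENNReal.ofReal_one]; exact ENNReal.ofReal_le_ofReal h1
      · have hAeq : A q = {ω | Y q.1 q.2 ω ≤ 1 / w q}ᶜ := by
          ext ω
          simp only [hA, Set.mem_setOf_eq, Set.mem_compl_iff, not_le]
          rw [div_lt_iff₀ hpos, mul_comm]
        have hmeas : MeasurableSet {ω | Y q.1 q.2 ω ≤ 1 / w q} :=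
          measurableSet_le (hYmeas q.1 q.2) measurable_const
        rw [hAeq, measure_compl hmeas (measure_ne_top μ _), measure_univ,
          cdf_eq μ Y hYfrechet q.1 q.2 _ (by positivity)]
        have harg : -(1 / (1 / w q)) = -(w q) := by
          rw [one_div_one_div]
        rw [harg]
        have hexp : (1 : ℝ) - w q ≤ Real.exp (-(w q)) := by
          have := Real.add_one_le_exp (-(w q)); linarith
        calc 1 - ENNReal.ofReal (Real.exp (-(w q)))
            ≤ 1 - ENNReal.ofReal (1 - w q) := by
              gcongr
          _ ≤ ENNReal.ofReal (w q) := by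
              rw [tsub_le_iff_right,
                ← ENNReal.ofReal_add (hw q) (by linarith : (0:ℝ) ≤ 1 - w q)]
              calc (1 : ENNReal) = ENNReal.ofReal 1 := ENNReal.ofReal_one.symm
                _ ≤ ENNReal.ofReal (w q + (1 - w q)) :=
                    ENNReal.ofReal_le_ofReal (by linarith)
  have hsumA : (∑' q, μ (A q)) ≠ ⊤ := by
    have h1 : (∑' q, μ (A q)) ≤ ∑' q, ENNReal.ofReal (w q) := ENNReal.tsum_le_tsum hAle
    have h2 : (∑' q, ENNReal.ofReal (w q)) = ENNReal.ofReal (∑' q, w q) :=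
      (ENNReal.ofReal_tsum_of_nonneg hw hsumw).symm
    exact ne_top_of_le_ne_top (by rw [h2]; exact ENNReal.ofReal_ne_top) h1
  have hae := MeasureTheory.ae_finite_setOf_mem (μ := μ) (s := A) hsumA
  have h0 : μ {ω | ¬ ({q | ω ∈ A q}.Finite)} = 0 := by
    exact ae_iff.mp hae
  refine measure_mono_null ?_ h0
  intro ω hω
  simp only [Set.mem_setOf_eq] at hω ⊢
  intro hfin
  apply hω
  have hsub : (Set.range fun q : ℕ × ℤ => w q * Y q.1 q.2 ω)
      ⊆ ((fun q : ℕ × ℤ => w q * Y q.1 q.2 ω) '' {q | ω ∈ A q}) ∪ Set.Iic 1 := by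
    rintro x ⟨q, rfl⟩
    rcases le_or_gt (w q * Y q.1 q.2 ω) 1 with h | h
    · exact Or.inr h
    · exact Or.inl ⟨q, h, rfl⟩
  exact ((hfin.image _).bddAbove.union bddAbove_Iic).mono hsub

end MM

section SupLemmas

lemma sup'_mul_le_iff (S : Finset ℕ) (hS : S.Nonempty) (a : ℕ → ℝ) (ha : ∀ s, 0 ≤ a s)
    (y u : ℝ) (hu : 0 ≤ u) :
    (S.sup' hS a) * y ≤ u ↔ ∀ s ∈ S, a s * y ≤ u := by
  constructor
  · intro h s hs
    rcases le_or_gt y 0 with hy | hy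
    · exact le_trans (mul_nonpos_of_nonneg_of_nonpos (ha s) hy) hu
    · exact le_trans (mul_le_mul_of_nonneg_right (Finset.le_sup' a hs) hy.le) h
  · intro h
    obtain ⟨s₀, hs₀, hsup⟩ := Finset.exists_mem_eq_sup' hS a
    rw [hsup]
    exact h s₀ hs₀

end SupLemmas

section Beta

variable (f : ℕ → ℤ → ℝ)

/-- `β_S(l,i) = max_{s ∈ S} α_{l, s-i}`, as a total function. -/
def betaN (S : Finset ℕ) (q : ℕ × ℤ) : NNReal :=
  S.sup fun s => (f q.1 ((s : ℤ) - q.2)).toNNReal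

def beta (S : Finset ℕ) (q : ℕ × ℤ) : ℝ := (betaN f S q : ℝ)

lemma beta_nonneg (S : Finset ℕ) (q : ℕ × ℤ) : 0 ≤ beta f S q := (betaN f S q).coe_nonneg

lemma beta_eq_sup' (hf : ∀ l j, 0 ≤ f l j) (S : Finset ℕ) (hS : S.Nonempty) (q : ℕ × ℤ) :
    beta f S q = S.sup' hS (fun s => f q.1 ((s : ℤ) - q.2)) := by
  rw [beta, betaN, ← Finset.sup'_eq_sup hS]
  rw [Finset.comp_sup'_eq_sup'_comp hS (fun x : NNReal => (x : ℝ)) (fun x y => NNReal.coe_max x y)]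
  apply Finset.sup'_congr hS rfl
  intro s _
  exact Real.coe_toNNReal _ (hf _ _)

lemma beta_union (S T : Finset ℕ) (q : ℕ × ℤ) :
    beta f (S ∪ T) q = max (beta f S q) (beta f T q) := by
  rw [beta, betaN, Finset.sup_union]
  exact NNReal.coe_max _ _

lemma beta_mono (S T : Finset ℕ) (h : S ⊆ T) (q : ℕ × ℤ) : beta f S q ≤ beta f T q := by
  have := Finset.sup_mono (f := fun s : ℕ => (f q.1 ((s : ℤ) - q.2)).toNNReal) h
  exact_mod_cast this

lemma beta_singleton (hf : ∀ l j, 0 ≤ f l j) (s : ℕ) (q : ℕ × ℤ) :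
    beta f {s} q = f q.1 ((s : ℤ) - q.2) := by
  rw [beta, betaN, Finset.sup_singleton, Real.coe_toNNReal _ (hf _ _)]

lemma le_beta (hf : ∀ l j, 0 ≤ f l j) (S : Finset ℕ) {s : ℕ} (hs : s ∈ S) (q : ℕ × ℤ) :
    f q.1 ((s : ℤ) - q.2) ≤ beta f S q := by
  rw [beta_eq_sup' f hf S ⟨s, hs⟩ q]
  exact Finset.le_sup' (fun t : ℕ => f q.1 ((t : ℤ) - q.2)) hs

lemma beta_le_sum (S : Finset ℕ) (hf : ∀ l j, 0 ≤ f l j) (q : ℕ × ℤ) :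
    beta f S q ≤ ∑ s ∈ S, f q.1 ((s : ℤ) - q.2) := by
  rcases S.eq_empty_or_nonempty with rfl | hS
  · simp [beta, betaN]
  · rw [beta_eq_sup' f hf S hS q]
    apply Finset.sup'_le
    intro s hs
    exact Finset.single_le_sum (f := fun t : ℕ => f q.1 ((t : ℤ) - q.2)) (fun t _ => hf _ _) hs

lemma summable_shift (hsumf : Summable fun q : ℕ × ℤ => f q.1 q.2) (s : ℤ) :
    Summable (fun q : ℕ × ℤ => f q.1 (s - q.2)) := by
  have : (fun q : ℕ × ℤ => f q.1 (s - q.2))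
      = (fun q : ℕ × ℤ => f q.1 q.2) ∘ ((Equiv.refl ℕ).prodCongr (Equiv.subLeft s)) := rfl
  rw [this]
  exact ((Equiv.refl ℕ).prodCongr (Equiv.subLeft s)).summable_iff.mpr hsumf

lemma tsum_shift (hsumf : Summable fun q : ℕ × ℤ => f q.1 q.2) (s : ℤ) :
    (∑' q : ℕ × ℤ, f q.1 (s - q.2)) = ∑' q : ℕ × ℤ, f q.1 q.2 := by
  exact ((Equiv.refl ℕ).prodCongr (Equiv.subLeft s)).tsum_eq (fun q : ℕ × ℤ => f q.1 q.2)

lemma summable_beta (hf : ∀ l j, 0 ≤ f l j)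
    (hsumf : Summable fun q : ℕ × ℤ => f q.1 q.2) (S : Finset ℕ) :
    Summable (beta f S) := by
  exact Summable.of_nonneg_of_le (beta_nonneg f S) (beta_le_sum f S hf)
    (summable_sum fun s _ => summable_shift f hsumf s)

end Beta

section GE

variable (μ : Measure Ω) [IsProbabilityMeasure μ] (Y : ℕ → ℤ → Ω → ℝ) (f : ℕ → ℤ → ℝ)

def Gset (S : Finset ℕ) (u : ℝ) : Set Ω :=
  ⋂ q : ℕ × ℤ, {ω | beta f S q * Y q.1 q.2 ω ≤ u}

lemma mem_Gset_iff (hf : ∀ l j, 0 ≤ f l j) (S : Finset ℕ) (hS : S.Nonempty)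
    (u : ℝ) (hu : 0 ≤ u) (ω : Ω) :
    ω ∈ Gset Y f S u ↔ ∀ q : ℕ × ℤ, ∀ s ∈ S, f q.1 ((s : ℤ) - q.2) * Y q.1 q.2 ω ≤ u := by
  simp only [Gset, Set.mem_iInter, Set.mem_setOf_eq]
  refine forall_congr' fun q => ?_
  rw [beta_eq_sup' f hf S hS q, sup'_mul_le_iff S hS _ (fun s => hf _ _) _ u hu]

lemma max_mul_le_iff {a b y u : ℝ} (ha : 0 ≤ a) (hb : 0 ≤ b) (hu : 0 ≤ u) :
    max a b * y ≤ u ↔ a * y ≤ u ∧ b * y ≤ u := by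
  rcases le_or_gt 0 y with hy | hy
  · constructor
    · intro h
      exact ⟨le_trans (mul_le_mul_of_nonneg_right (le_max_left a b) hy) h,
        le_trans (mul_le_mul_of_nonneg_right (le_max_right a b) hy) h⟩
    · intro ⟨h1, h2⟩
      rcases max_cases a b with ⟨hm, _⟩ | ⟨hm, _⟩ <;> rw [hm] <;> assumption
  · constructor
    · intro _
      exact ⟨le_trans (mul_nonpos_of_nonneg_of_nonpos ha hy.le) hu,
        le_trans (mul_nonpos_of_nonneg_of_nonpos hb hy.le) hu⟩
    · intro _
      exact le_trans (mul_nonpos_of_nonneg_of_nonpos (le_max_of_le_left ha) hy.le) hu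

lemma Gset_union (S T : Finset ℕ) (u : ℝ) (hu : 0 ≤ u) :
    Gset Y f (S ∪ T) u = Gset Y f S u ∩ Gset Y f T u := by
  rw [Gset, Gset, Gset, ← Set.iInter_inter_distrib]
  apply Set.iInter_congr
  intro q
  ext ω
  simp only [Set.mem_setOf_eq, Set.mem_inter_iff]
  rw [beta_union f S T q]
  exact max_mul_le_iff (beta_nonneg f S q) (beta_nonneg f T q) hu

lemma measurableSet_Gset (hYmeas : ∀ l j, Measurable (Y l j)) (S : Finset ℕ) (u : ℝ) :
    MeasurableSet (Gset Y f S u) :=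
  MeasurableSet.iInter fun q =>
    measurableSet_le (measurable_const.mul (hYmeas q.1 q.2)) measurable_const

lemma meas_Gset (hYmeas : ∀ l j, Measurable (Y l j))
    (hYindep : iIndepFun (fun q : ℕ × ℤ => Y q.1 q.2) μ)
    (hYfrechet : ∀ (l : ℕ) (j : ℤ) (y : ℝ), 0 < y →
      pr μ {ω | Y l j ω ≤ y} = Real.exp (-(1 / y)))
    (hf : ∀ l j, 0 ≤ f l j) (hsumf : Summable fun q : ℕ × ℤ => f q.1 q.2)
    (S : Finset ℕ) (u : ℝ) (hu : 0 < u) :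
    μ (Gset Y f S u) = ENNReal.ofReal (Real.exp (-((∑' q, beta f S q) / u))) :=
  meas_iInter_eq μ Y hYmeas hYindep hYfrechet (beta f S) (beta_nonneg f S)
    (summable_beta f hf hsumf S) u hu

def Eset (S : Finset ℕ) (u : ℝ) : Set Ω := {ω | ∀ s ∈ S, mmProc f Y s ω ≤ u}

lemma Gset_subset_Eset (hf : ∀ l j, 0 ≤ f l j) (S : Finset ℕ) (hS : S.Nonempty)
    (u : ℝ) (hu : 0 ≤ u) : Gset Y f S u ⊆ Eset Y f S u := by
  intro ω hω s hs
  apply ciSup_le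
  intro l
  apply ciSup_le
  intro j
  have h := (mem_Gset_iff Y f hf S hS u hu ω).1 hω (l, (s : ℤ) - j) s hs
  simpa [sub_sub_cancel] using h

lemma Eset_diff_Gset (hf : ∀ l j, 0 ≤ f l j) (S : Finset ℕ) (hS : S.Nonempty)
    (u : ℝ) (hu : 0 ≤ u) :
    Eset Y f S u \ Gset Y f S u ⊆ ⋃ s ∈ S, {ω | ¬ BddAbove
      (Set.range fun q : ℕ × ℤ => f q.1 ((s : ℤ) - q.2) * Y q.1 q.2 ω)} := by
  rintro ω ⟨hE, hG⟩
  replace hE : ∀ s ∈ S, mmProc f Y s ω ≤ u := hE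
  have hG' : ¬ ∀ q : ℕ × ℤ, ∀ s ∈ S, f q.1 ((s : ℤ) - q.2) * Y q.1 q.2 ω ≤ u := by
    rw [← mem_Gset_iff Y f hf S hS u hu ω]; exact hG
  push_neg at hG'
  obtain ⟨q, s, hs, hgt⟩ := hG'
  refine Set.mem_biUnion hs ?_
  simp only [Set.mem_setOf_eq]
  intro hbdd
  obtain ⟨M, hM⟩ := hbdd
  have hterm : ∀ l : ℕ, ∀ j : ℤ, f l j * Y l ((s : ℤ) - j) ω ≤ M := by
    intro l j
    have heq : f l j * Y l ((s : ℤ) - j) ω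
        = f l ((s : ℤ) - ((s : ℤ) - j)) * Y l ((s : ℤ) - j) ω := by
      rw [sub_sub_cancel]
    rw [heq]
    exact hM ⟨(l, (s : ℤ) - j), rfl⟩
  have hinner : ∀ l : ℕ, BddAbove (Set.range fun j : ℤ => f l j * Y l ((s : ℤ) - j) ω) := by
    intro l
    exact ⟨M, by rintro x ⟨j, rfl⟩; exact hterm l j⟩
  have houter : BddAbove (Set.range fun l : ℕ => ⨆ j : ℤ, f l j * Y l ((s : ℤ) - j) ω) := by
    refine ⟨M, ?_⟩
    rintro x ⟨l, rfl⟩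
    exact ciSup_le fun j => hterm l j
  have hX : f q.1 ((s : ℤ) - q.2) * Y q.1 q.2 ω ≤ mmProc f Y s ω := by
    calc f q.1 ((s : ℤ) - q.2) * Y q.1 q.2 ω
        = f q.1 ((s : ℤ) - q.2) * Y q.1 ((s : ℤ) - ((s : ℤ) - q.2)) ω := by
          rw [sub_sub_cancel]
      _ ≤ ⨆ j : ℤ, f q.1 j * Y q.1 ((s : ℤ) - j) ω := le_ciSup (hinner q.1) ((s : ℤ) - q.2)
      _ ≤ mmProc f Y s ω := le_ciSup houter q.1
  have := hE s hs
  linarith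

lemma Eset_ae_Gset (hYmeas : ∀ l j, Measurable (Y l j))
    (hYfrechet : ∀ (l : ℕ) (j : ℤ) (y : ℝ), 0 < y →
      pr μ {ω | Y l j ω ≤ y} = Real.exp (-(1 / y)))
    (hf : ∀ l j, 0 ≤ f l j) (hsumf : Summable fun q : ℕ × ℤ => f q.1 q.2)
    (S : Finset ℕ) (hS : S.Nonempty) (u : ℝ) (hu : 0 < u) :
    Eset Y f S u =ᵐ[μ] Gset Y f S u := by
  rw [MeasureTheory.ae_eq_set]
  constructor
  · apply measure_mono_null (Eset_diff_Gset Y f hf S hS u hu.le)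
    refine (measure_biUnion_null_iff (Set.to_countable (S : Set ℕ))).2 ?_
    intro s _
    exact unbdd_null μ Y hYmeas hYfrechet _ (fun q => hf _ _) (summable_shift f hsumf (s : ℤ))
  · rw [Set.diff_eq_empty.mpr (Gset_subset_Eset Y f hf S hS u hu.le)]
    exact measure_empty

lemma meas_Eset (hYmeas : ∀ l j, Measurable (Y l j))
    (hYindep : iIndepFun (fun q : ℕ × ℤ => Y q.1 q.2) μ)
    (hYfrechet : ∀ (l : ℕ) (j : ℤ) (y : ℝ), 0 < y →
      pr μ {ω | Y l j ω ≤ y} = Real.exp (-(1 / y)))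
    (hf : ∀ l j, 0 ≤ f l j) (hsumf : Summable fun q : ℕ × ℤ => f q.1 q.2)
    (S : Finset ℕ) (hS : S.Nonempty) (u : ℝ) (hu : 0 < u) :
    μ (Eset Y f S u) = ENNReal.ofReal (Real.exp (-((∑' q, beta f S q) / u))) := by
  rw [measure_congr (Eset_ae_Gset μ Y f hYmeas hYfrechet hf hsumf S hS u hu),
    meas_Gset μ Y f hYmeas hYindep hYfrechet hf hsumf S u hu]

lemma pr_diff {t : Set Ω} (s : Set Ω) (ht : MeasurableSet t) :
    pr μ (s ∩ tᶜ) = pr μ s - pr μ (s ∩ t) := by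
  have h := measure_inter_add_diff (μ := μ) s ht
  have hd : s \ t = s ∩ tᶜ := Set.diff_eq s t
  rw [hd] at h
  rw [pr, pr, pr, ← h, ENNReal.toReal_add (measure_ne_top μ _) (measure_ne_top μ _)]
  ring

lemma pr_Gset (hYmeas : ∀ l j, Measurable (Y l j))
    (hYindep : iIndepFun (fun q : ℕ × ℤ => Y q.1 q.2) μ)
    (hYfrechet : ∀ (l : ℕ) (j : ℤ) (y : ℝ), 0 < y →
      pr μ {ω | Y l j ω ≤ y} = Real.exp (-(1 / y)))
    (hf : ∀ l j, 0 ≤ f l j) (hsumf : Summable fun q : ℕ × ℤ => f q.1 q.2)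
    (S : Finset ℕ) (u : ℝ) (hu : 0 < u) :
    pr μ (Gset Y f S u) = Real.exp (-((∑' q, beta f S q) / u)) := by
  rw [pr, meas_Gset μ Y f hYmeas hYindep hYfrechet hf hsumf S u hu,
    ENNReal.toReal_ofReal (Real.exp_pos _).le]

end GE

section Formula

variable (μ : Measure Ω) [IsProbabilityMeasure μ] (Y : ℕ → ℤ → Ω → ℝ) (f : ℕ → ℤ → ℝ)

lemma pr_formula (hYmeas : ∀ l j, Measurable (Y l j))
    (hYindep : iIndepFun (fun q : ℕ × ℤ => Y q.1 q.2) μ)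
    (hYfrechet : ∀ (l : ℕ) (j : ℤ) (y : ℝ), 0 < y →
      pr μ {ω | Y l j ω ≤ y} = Real.exp (-(1 / y)))
    (hf : ∀ l j, 0 ≤ f l j) (hsumf : Summable fun q : ℕ × ℤ => f q.1 q.2)
    (k r : ℕ) (hk : 2 ≤ k) (hkr : k ≤ r) (u : ℝ) (hu : 0 < u) :
    pr μ ({ω | u < mmProc f Y 1 ω} ∩ maxLE (mmProc f Y) 1 k u
        ∩ maxGT (mmProc f Y) k r u)
      = Real.exp (-((∑' q, beta f (Finset.Icc 2 k) q) / u))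
        - Real.exp (-((∑' q, beta f (Finset.Icc 2 r) q) / u))
        - Real.exp (-((∑' q, beta f (Finset.Icc 1 k) q) / u))
        + Real.exp (-((∑' q, beta f (Finset.Icc 1 r) q) / u)) := by
  classical
  set X := mmProc f Y with hX
  -- identify the three events with E-sets
  have hBE : maxLE X 1 k u = Eset Y f (Finset.Icc 2 k) u := rfl
  have hAE : {ω | u < X 1 ω} = (Eset Y f {1} u)ᶜ := by
    ext ω
    simp [Eset, not_le, hX]
  have hCE : maxGT X k r u = (Eset Y f (Finset.Icc (k + 1) r) u)ᶜ := by
    ext ω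
    simp only [maxGT, Eset, Set.mem_setOf_eq, Set.mem_compl_iff, not_forall, not_le]
    tauto
  -- a.e. equal to the G-sets
  have hae : ∀ (S : Finset ℕ), Eset Y f S u =ᵐ[μ] Gset Y f S u := by
    intro S
    rcases S.eq_empty_or_nonempty with rfl | hS
    · have h1 : Eset Y f (∅ : Finset ℕ) u = Set.univ := by
        ext ω; simp [Eset]
      have h2 : Gset Y f (∅ : Finset ℕ) u = Set.univ := by
        ext ω
        simp [Gset, beta, betaN, hu.le]
      rw [h1, h2]
      exact Filter.EventuallyEq.rfl
    · exact Eset_ae_Gset μ Y f hYmeas hYfrechet hf hsumf S hS u hu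
  set G1 := Gset Y f {1} u with hG1
  set G2k := Gset Y f (Finset.Icc 2 k) u with hG2k
  set Gkr := Gset Y f (Finset.Icc (k + 1) r) u with hGkr
  have haeall : (({ω | u < X 1 ω} ∩ maxLE X 1 k u ∩ maxGT X k r u : Set Ω))
      =ᵐ[μ] (((G1ᶜ ∩ G2k) ∩ Gkrᶜ : Set Ω)) := by
    rw [hAE, hBE, hCE]
    exact (((hae {1}).compl.inter (hae (Finset.Icc 2 k))).inter
      (hae (Finset.Icc (k + 1) r)).compl)
  have hpr : pr μ ({ω | u < X 1 ω} ∩ maxLE X 1 k u ∩ maxGT X k r u)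
      = pr μ ((G1ᶜ ∩ G2k) ∩ Gkrᶜ) := by
    rw [pr, pr, measure_congr haeall]
  rw [hpr]
  have hmeasG1 : MeasurableSet G1 := measurableSet_Gset Y f hYmeas {1} u
  have hmeasGkr : MeasurableSet Gkr := measurableSet_Gset Y f hYmeas _ u
  have e1 : Finset.Icc 2 k ∪ {1} = Finset.Icc 1 k := by
    ext s; simp only [Finset.mem_union, Finset.mem_Icc, Finset.mem_singleton]; omega
  have e2 : Finset.Icc 2 k ∪ Finset.Icc (k + 1) r = Finset.Icc 2 r := by
    ext s; simp only [Finset.mem_union, Finset.mem_Icc]; omega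
  have e3 : Finset.Icc 2 r ∪ {1} = Finset.Icc 1 r := by
    ext s; simp only [Finset.mem_union, Finset.mem_Icc, Finset.mem_singleton]; omega
  have g1 : G2k ∩ G1 = Gset Y f (Finset.Icc 1 k) u := by
    rw [hG2k, hG1, ← Gset_union Y f _ _ u hu.le, e1]
  have g2 : G2k ∩ Gkr = Gset Y f (Finset.Icc 2 r) u := by
    rw [hG2k, hGkr, ← Gset_union Y f _ _ u hu.le, e2]
  have g3 : Gset Y f (Finset.Icc 2 r) u ∩ G1 = Gset Y f (Finset.Icc 1 r) u := by
    rw [hG1, ← Gset_union Y f _ _ u hu.le, e3]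
  rw [Set.inter_comm (G1ᶜ) G2k,
    pr_diff μ (G2k ∩ G1ᶜ) hmeasGkr,
    pr_diff μ G2k hmeasG1,
    Set.inter_right_comm G2k (G1ᶜ) Gkr, g2,
    pr_diff μ (Gset Y f (Finset.Icc 2 r) u) hmeasG1,
    g1, g3, hG2k]
  rw [pr_Gset μ Y f hYmeas hYindep hYfrechet hf hsumf (Finset.Icc 2 k) u hu,
    pr_Gset μ Y f hYmeas hYindep hYfrechet hf hsumf (Finset.Icc 2 r) u hu,
    pr_Gset μ Y f hYmeas hYindep hYfrechet hf hsumf (Finset.Icc 1 k) u hu,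
    pr_Gset μ Y f hYmeas hYindep hYfrechet hf hsumf (Finset.Icc 1 r) u hu]
  ring

end Formula

section Limits

lemma key_tendsto (x : ℕ → ℝ) (x₀ : ℝ) (hx : Tendsto x atTop (nhds x₀)) (hx0 : ∀ n, 0 ≤ x n) :
    Tendsto (fun n : ℕ => (n : ℝ) * (1 - Real.exp (-(x n / n)))) atTop (nhds x₀) := by
  have hquot : Tendsto (fun n : ℕ => x n / n) atTop (nhds 0) :=
    hx.div_atTop tendsto_natCast_atTop_atTop
  have hquotneg : Tendsto (fun n : ℕ => -(x n / n)) atTop (nhds 0) := by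
    simpa using hquot.neg
  have hexp : Tendsto (fun n : ℕ => Real.exp (-(x n / n))) atTop (nhds 1) := by
    have := (Real.continuous_exp.tendsto 0).comp hquotneg
    simpa [Function.comp_def] using this
  have hlow : Tendsto (fun n : ℕ => x n * Real.exp (-(x n / n))) atTop (nhds x₀) := by
    simpa using hx.mul hexp
  refine tendsto_of_tendsto_of_tendsto_of_le_of_le' hlow hx ?_ ?_
  · filter_upwards [eventually_ge_atTop 1] with n hn
    have hnpos : (0 : ℝ) < n := by exact_mod_cast hn
    set t := x n / n with hts
    have ht : 0 ≤ t := div_nonneg (hx0 n) hnpos.le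
    have hkey : t * Real.exp (-t) ≤ 1 - Real.exp (-t) := by
      have h1 : t + 1 ≤ Real.exp t := Real.add_one_le_exp t
      have h2 : Real.exp (-t) * Real.exp t = 1 := by
        rw [← Real.exp_add]; simp
      nlinarith [Real.exp_pos (-t)]
    have hxt : x n = (n : ℝ) * t := by
      rw [hts, mul_div_cancel₀ _ (ne_of_gt hnpos)]
    calc x n * Real.exp (-t) = (n : ℝ) * (t * Real.exp (-t)) := by rw [hxt]; ring
      _ ≤ (n : ℝ) * (1 - Real.exp (-t)) := by
          exact mul_le_mul_of_nonneg_left hkey hnpos.le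
  · filter_upwards [eventually_ge_atTop 1] with n hn
    have hnpos : (0 : ℝ) < n := by exact_mod_cast hn
    set t := x n / n with hts
    have hkey : 1 - Real.exp (-t) ≤ t := by
      have h1 := Real.add_one_le_exp (-t)
      linarith
    have hxt : x n = (n : ℝ) * t := by
      rw [hts, mul_div_cancel₀ _ (ne_of_gt hnpos)]
    calc (n : ℝ) * (1 - Real.exp (-t)) ≤ (n : ℝ) * t :=
          mul_le_mul_of_nonneg_left hkey hnpos.le
      _ = x n := hxt.symm

variable (f : ℕ → ℤ → ℝ)

lemma beta_tendsto (hf : ∀ l j, 0 ≤ f l j)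
    (hsumf : Summable fun q : ℕ × ℤ => f q.1 q.2)
    (k : ℕ) (hk : 2 ≤ k) (q : ℕ × ℤ) :
    Tendsto (fun r => beta f (Finset.Icc 2 r) q) atTop
      (nhds (max (beta f (Finset.Icc 2 k) q)
        (⨆ s : ℕ, f q.1 ((1 : ℤ) - q.2 + k + s)))) := by
  set T : ℕ → ℝ := fun s => f q.1 ((1 : ℤ) - q.2 + k + s) with hTs
  have hTb : ∀ s, T s ≤ ∑' p : ℕ × ℤ, f p.1 p.2 := by
    intro s
    have : T s = (fun p : ℕ × ℤ => f p.1 p.2) (q.1, (1 : ℤ) - q.2 + k + s) := rfl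
    rw [this]
    exact Summable.le_tsum hsumf _ (fun p _ => hf _ _)
  have hTbdd : BddAbove (Set.range T) := ⟨_, by rintro x ⟨s, rfl⟩; exact hTb s⟩
  set L := max (beta f (Finset.Icc 2 k) q) (⨆ s : ℕ, T s) with hL
  have hupper : ∀ r, beta f (Finset.Icc 2 r) q ≤ L := by
    intro r
    rcases le_or_gt 2 r with h2r | h2r
    · rw [beta_eq_sup' f hf _ (Finset.nonempty_Icc.mpr h2r) q]
      apply Finset.sup'_le
      intro s hs
      rw [Finset.mem_Icc] at hs
      rcases le_or_gt s k with hsk | hsk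
      · exact le_trans (le_beta f hf (Finset.Icc 2 k)
          (Finset.mem_Icc.mpr ⟨hs.1, hsk⟩) q) (le_max_left _ _)
      · have harg : ((s : ℤ) - q.2) = (1 : ℤ) - q.2 + k + ((s - (k+1) : ℕ) : ℤ) := by
          have : ((s - (k+1) : ℕ) : ℤ) = (s : ℤ) - (k+1) := by
            rw [Nat.cast_sub hsk]; push_cast; ring
          rw [this]; ring
        calc f q.1 ((s : ℤ) - q.2) = T (s - (k+1)) := by rw [hTs]; simp only; rw [harg]
          _ ≤ ⨆ s : ℕ, T s := le_ciSup hTbdd _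
          _ ≤ L := le_max_right _ _
    · have : Finset.Icc 2 r = ∅ := Finset.Icc_eq_empty (by omega)
      rw [this]
      have hb0 : beta f (∅ : Finset ℕ) q = 0 := by simp [beta, betaN]
      rw [hb0, hL]
      exact le_max_of_le_left (beta_nonneg f _ q)
  have hmono : Monotone fun r => beta f (Finset.Icc 2 r) q := by
    intro r1 r2 h12
    exact beta_mono f _ _ (Finset.Icc_subset_Icc_right h12) q
  have hbdd : BddAbove (Set.range fun r => beta f (Finset.Icc 2 r) q) :=
    ⟨L, by rintro x ⟨r, rfl⟩; exact hupper r⟩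
  have htend := tendsto_atTop_ciSup hmono hbdd
  have heq : (⨆ r, beta f (Finset.Icc 2 r) q) = L := by
    apply le_antisymm
    · exact ciSup_le hupper
    · rw [hL]
      apply max_le
      · exact le_ciSup hbdd k
      · apply ciSup_le
        intro s
        have harg2 : T s = f q.1 (((k+1+s : ℕ) : ℤ) - q.2) := by
          rw [hTs]; simp only; congr 1; push_cast; ring
        calc T s = f q.1 (((k+1+s : ℕ) : ℤ) - q.2) := harg2
          _ ≤ beta f (Finset.Icc 2 (k+1+s)) q :=
              le_beta f hf _ (Finset.mem_Icc.mpr ⟨by omega, le_refl _⟩) q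
          _ ≤ ⨆ r, beta f (Finset.Icc 2 r) q := le_ciSup hbdd (k+1+s)
  rw [heq] at htend
  exact htend

lemma d_tendsto (hf : ∀ l j, 0 ≤ f l j)
    (hsumf : Summable fun q : ℕ × ℤ => f q.1 q.2)
    (k : ℕ) (hk : 2 ≤ k) :
    Tendsto (fun r => ∑' q : ℕ × ℤ,
        (f q.1 ((1:ℤ) - q.2) - min (f q.1 ((1:ℤ) - q.2)) (beta f (Finset.Icc 2 r) q)))
      atTop
      (nhds (∑' q : ℕ × ℤ, (f q.1 ((1:ℤ) - q.2) - min (f q.1 ((1:ℤ) - q.2))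
        (max (beta f (Finset.Icc 2 k) q) (⨆ s : ℕ, f q.1 ((1:ℤ) - q.2 + k + s)))))) := by
  apply tendsto_tsum_of_dominated_convergence (bound := fun q : ℕ × ℤ => f q.1 ((1:ℤ) - q.2))
    (summable_shift f hsumf 1)
  · intro q
    exact tendsto_const_nhds.sub (Tendsto.min tendsto_const_nhds
      (beta_tendsto f hf hsumf k hk q))
  · apply Eventually.of_forall
    intro r q
    rw [Real.norm_eq_abs, abs_le]
    constructor
    · have h1 : min (f q.1 ((1:ℤ) - q.2)) (beta f (Finset.Icc 2 r) q) ≤ f q.1 ((1:ℤ) - q.2) :=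
        min_le_left _ _
      linarith [hf q.1 ((1:ℤ) - q.2)]
    · have : min (f q.1 ((1:ℤ) - q.2)) (beta f (Finset.Icc 2 r) q) ≥ 0 :=
        le_min (hf _ _) (beta_nonneg f _ q)
      linarith

end Limits

section Helpers

lemma minmax_identity (a m S : ℝ) :
    min a (max m S) - min a m = min a S - min a (min m S) := by
  rcases le_total a m with h1 | h1 <;> rcases le_total a S with h2 | h2 <;>
    rcases le_total m S with h3 | h3 <;>
    simp only [min_def, max_def] <;> split_ifs <;> linarith

variable (f : ℕ → ℤ → ℝ)

lemma summable_w1diff (hf : ∀ l j, 0 ≤ f l j)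
    (hsumf : Summable fun q : ℕ × ℤ => f q.1 q.2) (g : (ℕ × ℤ) → ℝ)
    (hg : ∀ q, 0 ≤ g q) :
    Summable (fun q : ℕ × ℤ => f q.1 ((1:ℤ) - q.2) - min (f q.1 ((1:ℤ) - q.2)) (g q)) :=
  Summable.of_nonneg_of_le
    (fun q => by
      have := min_le_left (f q.1 ((1:ℤ) - q.2)) (g q); linarith)
    (fun q => by
      have h0 : 0 ≤ min (f q.1 ((1:ℤ) - q.2)) (g q) := le_min (hf _ _) (hg q)
      linarith)
    (summable_shift f hsumf 1)

lemma tsum_beta_Icc_one (hf : ∀ l j, 0 ≤ f l j)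
    (hsumf : Summable fun q : ℕ × ℤ => f q.1 q.2) (m : ℕ) (hm : 1 ≤ m) :
    (∑' q : ℕ × ℤ, beta f (Finset.Icc 1 m) q)
      = (∑' q : ℕ × ℤ, beta f (Finset.Icc 2 m) q)
        + ∑' q : ℕ × ℤ, (f q.1 ((1:ℤ) - q.2)
            - min (f q.1 ((1:ℤ) - q.2)) (beta f (Finset.Icc 2 m) q)) := by
  have hsplit : Finset.Icc 1 m = Finset.Icc 2 m ∪ {1} := by
    ext s; simp only [Finset.mem_union, Finset.mem_Icc, Finset.mem_singleton]; omega
  have hpt : ∀ q : ℕ × ℤ, beta f (Finset.Icc 1 m) q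
      = beta f (Finset.Icc 2 m) q + (f q.1 ((1:ℤ) - q.2)
          - min (f q.1 ((1:ℤ) - q.2)) (beta f (Finset.Icc 2 m) q)) := by
    intro q
    rw [hsplit, beta_union f _ _ q, beta_singleton f hf 1 q]
    have h := max_add_min (beta f (Finset.Icc 2 m) q) (f q.1 ((1:ℤ) - q.2))
    have hc : min (f q.1 ((1:ℤ) - q.2)) (beta f (Finset.Icc 2 m) q)
        = beta f (Finset.Icc 2 m) q ⊓ f q.1 ((1:ℤ) - q.2) := min_comm _ _
    rw [hc]
    have : Nat.cast (1 : ℕ) = (1 : ℤ) := by norm_num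
    rw [this]
    linarith [h]
  rw [tsum_congr hpt]
  exact Summable.tsum_add (summable_beta f hf hsumf _)
    (summable_w1diff f hf hsumf _ (beta_nonneg f _))

lemma tsum_beta_le (hf : ∀ l j, 0 ≤ f l j)
    (hsumf : Summable fun q : ℕ × ℤ => f q.1 q.2) (S : Finset ℕ) :
    ∑' q : ℕ × ℤ, beta f S q ≤ (S.card : ℝ) * ∑' q : ℕ × ℤ, f q.1 q.2 := by
  calc ∑' q : ℕ × ℤ, beta f S q
      ≤ ∑' q : ℕ × ℤ, ∑ s ∈ S, f q.1 ((s : ℤ) - q.2) :=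
        Summable.tsum_le_tsum (beta_le_sum f S hf) (summable_beta f hf hsumf S)
          (summable_sum fun s _ => summable_shift f hsumf s)
    _ = ∑ s ∈ S, ∑' q : ℕ × ℤ, f q.1 ((s : ℤ) - q.2) :=
        Summable.tsum_finsetSum fun s _ => summable_shift f hsumf s
    _ = ∑ s ∈ S, ∑' q : ℕ × ℤ, f q.1 q.2 :=
        Finset.sum_congr rfl fun s _ => tsum_shift f hsumf s
    _ = (S.card : ℝ) * ∑' q : ℕ × ℤ, f q.1 q.2 := by
        rw [Finset.sum_const, nsmul_eq_mul]

lemma tsum_beta_nonneg (S : Finset ℕ) : 0 ≤ ∑' q : ℕ × ℤ, beta f S q :=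
  tsum_nonneg (beta_nonneg f S)

lemma final_identity (hf : ∀ l j, 0 ≤ f l j)
    (hsumf : Summable fun q : ℕ × ℤ => f q.1 q.2) (k : ℕ) (hk : 2 ≤ k) :
    (∑' q : ℕ × ℤ, (f q.1 ((1:ℤ) - q.2)
        - min (f q.1 ((1:ℤ) - q.2)) (beta f (Finset.Icc 2 k) q)))
      - (∑' q : ℕ × ℤ, (f q.1 ((1:ℤ) - q.2) - min (f q.1 ((1:ℤ) - q.2))
          (max (beta f (Finset.Icc 2 k) q) (⨆ s : ℕ, f q.1 ((1:ℤ) - q.2 + k + s)))))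
    = ∑' (l : ℕ) (j : ℤ),
        (min (f l j) (⨆ s : ℕ, f l (j + k + s))
          - min (f l j)
              (min ((Finset.Icc 2 k).sup' (Finset.nonempty_Icc.mpr hk)
                  fun s => f l (j + s - 1))
                (⨆ s : ℕ, f l (j + k + s)))) := by
  classical
  set w1 : ℕ × ℤ → ℝ := fun q => f q.1 ((1:ℤ) - q.2) with hw1
  set mq : ℕ × ℤ → ℝ := beta f (Finset.Icc 2 k) with hmq
  set Sq : ℕ × ℤ → ℝ := fun q => ⨆ s : ℕ, f q.1 ((1:ℤ) - q.2 + k + s) with hSq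
  set g' : ℕ × ℤ → ℝ := fun p =>
    (min (f p.1 p.2) (⨆ s : ℕ, f p.1 (p.2 + k + s))
      - min (f p.1 p.2)
          (min ((Finset.Icc 2 k).sup' (Finset.nonempty_Icc.mpr hk)
              fun s => f p.1 (p.2 + s - 1))
            (⨆ s : ℕ, f p.1 (p.2 + k + s)))) with hg'
  have hsum1 : Summable (fun q => w1 q - min (w1 q) (mq q)) :=
    summable_w1diff f hf hsumf _ (beta_nonneg f _)
  have hmax_nonneg : ∀ q, 0 ≤ max (mq q) (Sq q) :=
    fun q => le_max_of_le_left (beta_nonneg f _ q)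
  have hsum2 : Summable (fun q => w1 q - min (w1 q) (max (mq q) (Sq q))) :=
    summable_w1diff f hf hsumf _ hmax_nonneg
  rw [← Summable.tsum_sub hsum1 hsum2]
  -- per-term identity: equals g' ∘ (shift)
  have hpt : ∀ q : ℕ × ℤ,
      (w1 q - min (w1 q) (mq q)) - (w1 q - min (w1 q) (max (mq q) (Sq q)))
        = g' (q.1, (1:ℤ) - q.2) := by
    intro q
    have h1 : (w1 q - min (w1 q) (mq q)) - (w1 q - min (w1 q) (max (mq q) (Sq q)))
        = min (w1 q) (max (mq q) (Sq q)) - min (w1 q) (mq q) := by ring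
    rw [h1, minmax_identity (w1 q) (mq q) (Sq q)]
    have e1 : f (q.1, (1:ℤ) - q.2).1 (q.1, (1:ℤ) - q.2).2 = w1 q := rfl
    have e2 : (⨆ s : ℕ, f (q.1, (1:ℤ) - q.2).1 ((q.1, (1:ℤ) - q.2).2 + k + s)) = Sq q := rfl
    have e3 : ((Finset.Icc 2 k).sup' (Finset.nonempty_Icc.mpr hk)
        fun s => f (q.1, (1:ℤ) - q.2).1 ((q.1, (1:ℤ) - q.2).2 + s - 1)) = mq q := by
      rw [hmq, beta_eq_sup' f hf _ (Finset.nonempty_Icc.mpr hk) q]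
      apply Finset.sup'_congr _ rfl
      intro s _
      congr 1
      ring
    rw [hg']
    simp only [e1, e2, e3]
  rw [tsum_congr hpt]
  -- reindex by the equivalence (l, i) ↦ (l, 1 - i)
  have heq : (∑' q : ℕ × ℤ, g' (q.1, (1:ℤ) - q.2)) = ∑' p : ℕ × ℤ, g' p := by
    have : (fun q : ℕ × ℤ => g' (q.1, (1:ℤ) - q.2))
        = g' ∘ ((Equiv.refl ℕ).prodCongr (Equiv.subLeft (1:ℤ))) := rfl
    rw [this]
    exact ((Equiv.refl ℕ).prodCongr (Equiv.subLeft (1:ℤ))).tsum_eq g'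
  rw [heq]
  -- nested sum
  have hg'sum : Summable g' := by
    have hcomp : Summable (g' ∘ ((Equiv.refl ℕ).prodCongr (Equiv.subLeft (1:ℤ)))) := by
      have hps : (g' ∘ ((Equiv.refl ℕ).prodCongr (Equiv.subLeft (1:ℤ))))
          = fun q : ℕ × ℤ => g' (q.1, (1:ℤ) - q.2) := rfl
      rw [hps]
      have hpt2 : (fun q : ℕ × ℤ => g' (q.1, (1:ℤ) - q.2))
          = fun q => (w1 q - min (w1 q) (mq q))
              - (w1 q - min (w1 q) (max (mq q) (Sq q))) := by
        funext q; rw [hpt q]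
      rw [hpt2]
      exact hsum1.sub hsum2
    exact ((Equiv.refl ℕ).prodCongr (Equiv.subLeft (1:ℤ))).summable_iff.mp hcomp
  exact Summable.tsum_prod hg'sum

end Helpers


/-- the limit of `n P(X_1 > n/τ, M_{1,k} ≤ n/τ < M_{k,r_n})` for a
moving maxima process, in terms of the signatures. -/
theorem mm_localDk_limit
    (μ : Measure Ω) [IsProbabilityMeasure μ]
    (Y : ℕ → ℤ → Ω → ℝ) (α : ℕ → ℤ → ℝ) (τ : ℝ) (hτ : 0 < τ)
    (k : ℕ) (hk : 2 ≤ k) (kseq : ℕ → ℕ)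
    (hkseq : Tendsto (fun n : ℕ => (kseq n : ℝ)) atTop atTop)
    (hkseqn : Tendsto (fun n : ℕ => (kseq n : ℝ) / (n : ℝ)) atTop (nhds 0))
    (hYmeas : ∀ l j, Measurable (Y l j))
    (hYindep : iIndepFun (fun q : ℕ × ℤ => Y q.1 q.2) μ)
    (hYfrechet : ∀ (l : ℕ) (j : ℤ) (y : ℝ), 0 < y →
      pr μ {ω | Y l j ω ≤ y} = Real.exp (-(1 / y)))
    (hα0 : ∀ l j, 0 ≤ α l j)
    (hsum : Summable fun q : ℕ × ℤ => α q.1 q.2)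
    (hsum1 : ∑' q : ℕ × ℤ, α q.1 q.2 = 1) :
    Tendsto (fun n : ℕ => (n : ℝ) *
        pr μ ({ω | (n : ℝ) / τ < mmProc α Y 1 ω}
          ∩ maxLE (mmProc α Y) 1 k ((n : ℝ) / τ)
          ∩ maxGT (mmProc α Y) k (n / kseq n) ((n : ℝ) / τ)))
      atTop (nhds (τ * ∑' (l : ℕ) (j : ℤ),
        (min (α l j) (⨆ s : ℕ, α l (j + k + s))
          - min (α l j)
              (min ((Finset.Icc 2 k).sup' (Finset.nonempty_Icc.mpr hk)
                  fun s => α l (j + s - 1))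
                (⨆ s : ℕ, α l (j + k + s)))))) := by
  classical
  set w1 : ℕ × ℤ → ℝ := fun q => α q.1 ((1:ℤ) - q.2) with hw1
  set a : ℝ := ∑' q : ℕ × ℤ, beta α (Finset.Icc 2 k) q with ha
  set a' : ℝ := ∑' q : ℕ × ℤ, beta α (Finset.Icc 1 k) q with ha'
  set br : ℕ → ℝ := fun m => ∑' q : ℕ × ℤ, beta α (Finset.Icc 2 m) q with hbr
  set dr : ℕ → ℝ := fun m => ∑' q : ℕ × ℤ,
    (w1 q - min (w1 q) (beta α (Finset.Icc 2 m) q)) with hdr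
  set dinf : ℝ := ∑' q : ℕ × ℤ, (w1 q - min (w1 q)
    (max (beta α (Finset.Icc 2 k) q)
      (⨆ s : ℕ, α q.1 ((1:ℤ) - q.2 + k + s)))) with hdinf
  set r : ℕ → ℕ := fun n => n / kseq n with hrdef
  -- r tends to infinity
  have hrtop : Tendsto r atTop atTop := by
    rw [tendsto_atTop]
    intro C
    have hC : (0:ℝ) < 1 / (C + 1) := by positivity
    have h1 : ∀ᶠ n : ℕ in atTop, (kseq n : ℝ) / n < 1 / (C + 1) :=
      hkseqn.eventually (gt_mem_nhds hC)
    filter_upwards [h1, hkseq.eventually_ge_atTop 1, eventually_ge_atTop 1]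
      with n hn hk1 hn1
    have hkpos : 1 ≤ kseq n := by exact_mod_cast hk1
    have hnpos : (0:ℝ) < n := by
      have : (1:ℝ) ≤ n := by exact_mod_cast hn1
      linarith
    have hC1 : (0:ℝ) < (C:ℝ) + 1 := by positivity
    have h2r : (kseq n : ℝ) * (C + 1) < 1 * n := (div_lt_div_iff₀ hnpos hC1).1 hn
    have h2 : kseq n * (C + 1) < n := by
      rw [one_mul] at h2r
      exact_mod_cast h2r
    have h3 : C * kseq n ≤ n := by
      calc C * kseq n = kseq n * C := Nat.mul_comm _ _
        _ ≤ kseq n * (C + 1) := Nat.mul_le_mul_left _ (by omega)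
        _ ≤ n := h2.le
    exact (Nat.le_div_iff_mul_le (by omega)).2 h3
  -- nonnegativity
  have ha0 : 0 ≤ a := tsum_beta_nonneg α _
  have ha'0 : 0 ≤ a' := tsum_beta_nonneg α _
  have hbr0 : ∀ m, 0 ≤ br m := fun m => tsum_beta_nonneg α _
  have hdr0 : ∀ m, 0 ≤ dr m := fun m => tsum_nonneg (fun q => by
    have := min_le_left (w1 q) (beta α (Finset.Icc 2 m) q)
    simp only [sub_nonneg]
    exact this)
  have hdrc : Tendsto (fun n => dr (r n)) atTop (nhds dinf) :=
    (d_tendsto α hα0 hsum k hk).comp hrtop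
  have hsplit : ∀ m, 1 ≤ m →
      (∑' q : ℕ × ℤ, beta α (Finset.Icc 1 m) q) = br m + dr m := fun m hm =>
    tsum_beta_Icc_one α hα0 hsum m hm
  have hbrle : ∀ m, br m ≤ (m : ℝ) := by
    intro m
    have h1 := tsum_beta_le α hα0 hsum (Finset.Icc 2 m)
    rw [hsum1, mul_one] at h1
    refine h1.trans ?_
    have hcard : (Finset.Icc 2 m).card ≤ m := by rw [Nat.card_Icc]; omega
    exact_mod_cast hcard
  -- T3 : the exp factor tends to 1
  have hT3 : Tendsto (fun n : ℕ => Real.exp (-(br (r n) * τ / n))) atTop (nhds 1) := by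
    have harg : Tendsto (fun n : ℕ => br (r n) * τ / n) atTop (nhds 0) := by
      apply squeeze_zero' (g := fun n : ℕ => τ / (kseq n : ℝ))
      · exact Eventually.of_forall fun n =>
          div_nonneg (mul_nonneg (hbr0 _) hτ.le) (Nat.cast_nonneg n)
      · filter_upwards [eventually_ge_atTop 1, hkseq.eventually_ge_atTop 1]
          with n hn hkq
        have hnpos : (0:ℝ) < n := by
          have : (1:ℝ) ≤ n := by exact_mod_cast hn
          linarith
        have hkpos : (0:ℝ) < kseq n := by linarith
        have h1 : br (r n) ≤ (n : ℝ) / (kseq n) := by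
          refine (hbrle (r n)).trans ?_
          exact Nat.cast_div_le
        calc br (r n) * τ / n ≤ ((n:ℝ) / kseq n) * τ / n := by
              gcongr
          _ = τ / kseq n := by field_simp
      · exact tendsto_const_nhds.div_atTop hkseq
    have := (Real.continuous_exp.tendsto 0).comp (by simpa using harg.neg)
    simpa [Function.comp_def] using this
  -- Tendsto of the model function
  have hT1 : Tendsto (fun n : ℕ => (n:ℝ) * (1 - Real.exp (-(a' * τ / n))))
      atTop (nhds (a' * τ)) :=
    key_tendsto _ _ tendsto_const_nhds (fun _ => mul_nonneg ha'0 hτ.le)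
  have hT2 : Tendsto (fun n : ℕ => (n:ℝ) * (1 - Real.exp (-(a * τ / n))))
      atTop (nhds (a * τ)) :=
    key_tendsto _ _ tendsto_const_nhds (fun _ => mul_nonneg ha0 hτ.le)
  have hT4 : Tendsto (fun n : ℕ => (n:ℝ) * (1 - Real.exp (-(dr (r n) * τ / n))))
      atTop (nhds (dinf * τ)) :=
    key_tendsto _ _ (hdrc.mul_const τ) (fun n => mul_nonneg (hdr0 _) hτ.le)
  have hG : Tendsto (fun n : ℕ =>
      ((n:ℝ) * (1 - Real.exp (-(a' * τ / n))) - (n:ℝ) * (1 - Real.exp (-(a * τ / n))))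
        - Real.exp (-(br (r n) * τ / n)) * ((n:ℝ) * (1 - Real.exp (-(dr (r n) * τ / n)))))
      atTop (nhds ((a' * τ - a * τ) - 1 * (dinf * τ))) :=
    (hT1.sub hT2).sub (hT3.mul hT4)
  -- eventual equality
  have hev : ∀ᶠ n : ℕ in atTop,
      ((n:ℝ) * (1 - Real.exp (-(a' * τ / n))) - (n:ℝ) * (1 - Real.exp (-(a * τ / n))))
        - Real.exp (-(br (r n) * τ / n)) * ((n:ℝ) * (1 - Real.exp (-(dr (r n) * τ / n))))
      = (n : ℝ) * pr μ ({ω | (n : ℝ) / τ < mmProc α Y 1 ω}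
          ∩ maxLE (mmProc α Y) 1 k ((n : ℝ) / τ)
          ∩ maxGT (mmProc α Y) k (n / kseq n) ((n : ℝ) / τ)) := by
    filter_upwards [eventually_ge_atTop 1, hrtop.eventually_ge_atTop k] with n hn hrk
    have hnpos : (0:ℝ) < n := by
      have : (1:ℝ) ≤ n := by exact_mod_cast hn
      linarith
    have hu : 0 < (n:ℝ) / τ := div_pos hnpos hτ
    rw [pr_formula μ Y α hYmeas hYindep hYfrechet hα0 hsum k (r n) hk hrk _ hu]
    simp only [div_div_eq_mul_div]
    rw [hsplit (r n) (le_trans (by omega) hrk)]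
    rw [← ha, ← ha']
    have hbrn : (∑' q : ℕ × ℤ, beta α (Finset.Icc 2 (r n)) q) = br (r n) := by rw [hbr]
    rw [hbrn]
    have hexpadd : Real.exp (-((br (r n) + dr (r n)) * τ / n))
        = Real.exp (-(br (r n) * τ / n)) * Real.exp (-(dr (r n) * τ / n)) := by
      rw [← Real.exp_add]; congr 1; ring
    rw [hexpadd]
    ring
  have hfinal := hG.congr' hev
  -- identify the limit value
  have hval : (a' * τ - a * τ) - 1 * (dinf * τ)
      = τ * ∑' (l : ℕ) (j : ℤ),
        (min (α l j) (⨆ s : ℕ, α l (j + k + s))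
          - min (α l j)
              (min ((Finset.Icc 2 k).sup' (Finset.nonempty_Icc.mpr hk)
                  fun s => α l (j + s - 1))
                (⨆ s : ℕ, α l (j + k + s)))) := by
    have hsp := hsplit k (by omega)
    rw [← ha'] at hsp
    have hfi := final_identity α hα0 hsum k hk
    have hdrk : dr k = ∑' q : ℕ × ℤ, (α q.1 ((1:ℤ) - q.2)
        - min (α q.1 ((1:ℤ) - q.2)) (beta α (Finset.Icc 2 k) q)) := by rw [hdr]
    have hdinf' : dinf = ∑' q : ℕ × ℤ, (α q.1 ((1:ℤ) - q.2)
        - min (α q.1 ((1:ℤ) - q.2)) (max (beta α (Finset.Icc 2 k) q)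
          (⨆ s : ℕ, α q.1 ((1:ℤ) - q.2 + k + s)))) := by rw [hdinf]
    rw [← hdrk, ← hdinf'] at hfi
    -- hfi : dr k - dinf = Σ'Σ' ...
    have hbk : br k = a := by rw [hbr, ha]
    rw [hbk] at hsp
    -- hsp : a' = a + dr k
    rw [← hfi]
    rw [hsp]
    ring
  rw [← hval]
  exact hfinal

end EIPaper
end
end
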